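/- arXiv:2008.00164 — 8 statements merged into one kernel-verified Lean document; each statement's English description precedes it below -/
import Mathlib

section
/- Let θ ∈ Θ with θ ≠ θ*. If b_0(θ*) > 0 and q_t ∈ O(θ,θ*) for infinitely many t, then b_t(θ) → 0 as t → ∞ almost surely. -/
open MeasureTheory Filter

/-- Kullback–Leibler divergence between two probability vectors on a finite set. -/
noncomputable def klDivFin {S : Type*} [Fintype S] (p r : S → ℝ) : ℝ :=
  ∑ s, if 0 < p s then p s * Real.log (p s / r s) else 0

/-!
Write `L_t(θ) = l(s_t | θ, q_t)`; almost surely `L_t(θ*) > 0` for all `t`. Bayes' rule makes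
`b_t(θ) / b_t(θ*)` equal to `b_0(θ) / b_0(θ*) · ∏_{i ≤ t} L_i(θ) / L_i(θ*)`, so
`b_t(θ) ≤ b_0(θ) / b_0(θ*) · Z_t²` with `Z_t = ∏_{i ≤ t} √(L_i(θ) / L_i(θ*))`. The factors of `Z`
are independent, with means the Bhattacharyya coefficients
`ρ(q_i) = ∑ₛ √(l(s|θ,q_i) l(s|θ*,q_i)) ≤ 1` (AM-GM), so `Z` is a nonnegative supermartingale
with `E Z_t = ∏_{i ≤ t} ρ(q_i)`. AM-GM is strict on the finitely many states of `O(θ,θ*)`, so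
there `ρ ≤ ρ₀ < 1`; as they are visited infinitely often, `E Z_t → 0`. By Doob's theorem `Z`
converges a.s., and by Fatou's lemma its limit has mean `0`. Hence `Z_t → 0`, and so
`b_t(θ) → 0`, almost surely.
-/

open Finset ProbabilityTheory
open scoped Topology

section Bhattacharyya

variable {S : Type*} [Fintype S]

/-- The Bhattacharyya coefficient `∑ₓ √(p x r x)`, written as the `r`-expectation of `√(p / r)`. -/
noncomputable def bhattacharyya (p r : S → ℝ) : ℝ :=
  ∑ x, r x * √(p x / r x)

lemma mul_sqrt_div_eq_sqrt_mul_sqrt (a : ℝ) {c : ℝ} (hc : 0 ≤ c) :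
    c * √(a / c) = √a * √c := by
  rcases hc.eq_or_lt with rfl | hc
  · simp
  · rw [Real.sqrt_div' a hc.le]
    nth_rw 1 [← Real.mul_self_sqrt hc.le]
    field_simp [(Real.sqrt_pos.2 hc).ne']

lemma sqrt_mul_sqrt_le_add_div_two {a c : ℝ} (ha : 0 ≤ a) (hc : 0 ≤ c) :
    √a * √c ≤ (a + c) / 2 := by
  nlinarith [sq_nonneg (√a - √c), Real.sq_sqrt ha, Real.sq_sqrt hc]

lemma sqrt_mul_sqrt_lt_add_div_two {a c : ℝ} (ha : 0 ≤ a) (hc : 0 ≤ c) (hne : a ≠ c) :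
    √a * √c < (a + c) / 2 := by
  have hsub : √a - √c ≠ 0 := sub_ne_zero.2 fun h => hne ((Real.sqrt_inj ha hc).1 h)
  have : 0 < (√a - √c) ^ 2 := by positivity
  nlinarith [Real.sq_sqrt ha, Real.sq_sqrt hc]

variable {p r : S → ℝ}

lemma bhattacharyya_nonneg (hr : ∀ x, 0 ≤ r x) : 0 ≤ bhattacharyya p r :=
  sum_nonneg fun x _ => mul_nonneg (hr x) (Real.sqrt_nonneg _)

lemma bhattacharyya_eq_sum_sqrt_mul_sqrt (hr : ∀ x, 0 ≤ r x) :
    bhattacharyya p r = ∑ x, √(p x) * √(r x) := by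
  simp only [bhattacharyya, mul_sqrt_div_eq_sqrt_mul_sqrt _ (hr _)]

lemma sum_add_div_two_eq_one (hps : ∑ x, p x = 1) (hrs : ∑ x, r x = 1) :
    ∑ x, (p x + r x) / 2 = 1 := by
  rw [← sum_div, sum_add_distrib, hps, hrs]
  norm_num

lemma bhattacharyya_le_one (hp : ∀ x, 0 ≤ p x) (hr : ∀ x, 0 ≤ r x)
    (hps : ∑ x, p x = 1) (hrs : ∑ x, r x = 1) : bhattacharyya p r ≤ 1 := by
  rw [bhattacharyya_eq_sum_sqrt_mul_sqrt hr, ← sum_add_div_two_eq_one hps hrs]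
  exact sum_le_sum fun x _ => sqrt_mul_sqrt_le_add_div_two (hp x) (hr x)

lemma bhattacharyya_lt_one (hp : ∀ x, 0 ≤ p x) (hr : ∀ x, 0 ≤ r x)
    (hps : ∑ x, p x = 1) (hrs : ∑ x, r x = 1) (hne : p ≠ r) : bhattacharyya p r < 1 := by
  obtain ⟨x₀, hx₀⟩ := Function.ne_iff.1 hne
  rw [bhattacharyya_eq_sum_sqrt_mul_sqrt hr, ← sum_add_div_two_eq_one hps hrs]
  exact sum_lt_sum (fun x _ => sqrt_mul_sqrt_le_add_div_two (hp x) (hr x))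
    ⟨x₀, mem_univ _, sqrt_mul_sqrt_lt_add_div_two (hp x₀) (hr x₀) hx₀⟩

lemma ne_of_klDivFin_pos (h : 0 < klDivFin p r) : p ≠ r := by
  rintro rfl
  refine h.ne' (sum_eq_zero fun x _ => ?_)
  split_ifs with hx
  · rw [div_self hx.ne', Real.log_one, mul_zero]
  · rfl

end Bhattacharyya

lemma tendsto_prod_range_zero_of_frequently_le {a : ℕ → ℝ} {r : ℝ} (h0 : ∀ i, 0 ≤ a i)
    (h1 : ∀ i, a i ≤ 1) (hr : r < 1) (hfreq : ∃ᶠ i in atTop, a i ≤ r) :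
    Tendsto (fun n => ∏ i ∈ range n, a i) atTop (𝓝 0) := by
  have hanti : Antitone fun n => ∏ i ∈ range n, a i :=
    antitone_nat_of_succ_le fun n => by
      rw [prod_range_succ]
      exact mul_le_of_le_one_right (prod_nonneg fun i _ => h0 i) (h1 n)
  have hsmall : ∀ k, ∃ n, ∏ i ∈ range n, a i ≤ r ^ k := by
    intro k
    obtain ⟨F, hF, hcard⟩ := (Nat.frequently_atTop_iff_infinite.1 hfreq).exists_subset_card_eq k
    have hFn : F ⊆ range (F.sup id + 1) := fun i hi =>
      mem_range.2 (Nat.lt_succ_of_le (le_sup (f := id) hi))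
    refine ⟨F.sup id + 1, ?_⟩
    rw [← prod_sdiff hFn, ← hcard]
    calc (∏ i ∈ range (F.sup id + 1) \ F, a i) * ∏ i ∈ F, a i ≤ ∏ i ∈ F, a i :=
          mul_le_of_le_one_left (prod_nonneg fun i _ => h0 i)
            (prod_le_one (fun i _ => h0 i) fun i _ => h1 i)
      _ ≤ ∏ _i ∈ F, r := prod_le_prod (fun i _ => h0 i) fun i hi => hF hi
      _ = r ^ F.card := prod_const r
  refine tendsto_order.2 ⟨fun c hc => Eventually.of_forall fun n =>
    hc.trans_le (prod_nonneg fun i _ => h0 i), fun c hc => ?_⟩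
  obtain ⟨k, hk⟩ := exists_pow_lt_of_lt_one hc hr
  obtain ⟨n, hn⟩ := hsmall k
  exact eventually_atTop.2 ⟨n, fun m hm => ((hanti hm).trans hn).trans_lt hk⟩

lemma tendsto_prod_bhattacharyya_zero {Q S : Type*} [Finite Q] [Fintype S] {p r : Q → S → ℝ}
    (hp : ∀ q x, 0 ≤ p q x) (hr : ∀ q x, 0 ≤ r q x) (hps : ∀ q, ∑ x, p q x = 1)
    (hrs : ∀ q, ∑ x, r q x = 1) (q : ℕ → Q)
    (hq : {t | 0 < klDivFin (p (q t)) (r (q t))}.Infinite) :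
    Tendsto (fun n => ∏ i ∈ range n, bhattacharyya (p (q (i + 1))) (r (q (i + 1)))) atTop
      (𝓝 0) := by
  obtain ⟨q₀, hq₀, hq₀_max⟩ := Set.exists_max_image {q' | 0 < klDivFin (p q') (r q')}
    (fun q' => bhattacharyya (p q') (r q')) (Set.toFinite _)
    (hq.nonempty.elim fun t ht => ⟨q t, ht⟩)
  have hfreq := Nat.frequently_atTop_iff_infinite.2 hq
  rw [← map_add_atTop_eq_nat 1, frequently_map] at hfreq
  exact tendsto_prod_range_zero_of_frequently_le (fun n => bhattacharyya_nonneg (hr _))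
    (fun n => bhattacharyya_le_one (hp _) (hr _) (hps _) (hrs _))
    (bhattacharyya_lt_one (hp q₀) (hr q₀) (hps q₀) (hrs q₀) (ne_of_klDivFin_pos hq₀))
    (hfreq.mono fun n hn => hq₀_max _ hn)

section BayesUpdate

variable {Θ : Type*} [Fintype Θ]

noncomputable def bayesUpdate (L b : Θ → ℝ) (θ : Θ) : ℝ :=
  L θ * b θ / ∑ θ', L θ' * b θ'

variable {L b : ℕ → Θ → ℝ}

lemma bayes_nonneg (hb : ∀ t, b (t + 1) = bayesUpdate (L t) (b t)) (hL : ∀ t θ, 0 ≤ L t θ)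
    (h0 : ∀ θ, 0 ≤ b 0 θ) (t : ℕ) (θ : Θ) : 0 ≤ b t θ := by
  induction t generalizing θ with
  | zero => exact h0 θ
  | succ t ih =>
    rw [hb, bayesUpdate]
    exact div_nonneg (mul_nonneg (hL t θ) (ih θ))
      (sum_nonneg fun θ' _ => mul_nonneg (hL t θ') (ih θ'))

lemma bayes_le_one (hb : ∀ t, b (t + 1) = bayesUpdate (L t) (b t)) (hL : ∀ t θ, 0 ≤ L t θ)
    (h0 : ∀ θ, 0 ≤ b 0 θ) (hsum : ∑ θ, b 0 θ = 1) (t : ℕ) (θ : Θ) : b t θ ≤ 1 := by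
  cases t with
  | zero => exact hsum ▸ single_le_sum (fun θ' _ => h0 θ') (mem_univ θ)
  | succ t =>
    have hterm : ∀ θ', 0 ≤ L t θ' * b t θ' := fun θ' =>
      mul_nonneg (hL t θ') (bayes_nonneg hb hL h0 t θ')
    rw [hb, bayesUpdate]
    exact div_le_one_of_le₀ (single_le_sum (fun θ' _ => hterm θ') (mem_univ θ))
      (sum_nonneg fun θ' _ => hterm θ')

lemma bayes_mul_prod_eq (hb : ∀ t, b (t + 1) = bayesUpdate (L t) (b t)) (θ θ' : Θ) (t : ℕ) :
    b t θ * (b 0 θ' * ∏ i ∈ range t, L i θ') = b t θ' * (b 0 θ * ∏ i ∈ range t, L i θ) := by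
  induction t with
  | zero => simp [mul_comm]
  | succ t ih =>
    rw [hb, bayesUpdate, bayesUpdate, prod_range_succ, prod_range_succ]
    linear_combination (L t θ * L t θ' / ∑ θ'', L t θ'' * b t θ'') * ih

lemma bayes_le_mul_prod_div (hb : ∀ t, b (t + 1) = bayesUpdate (L t) (b t))
    (hL : ∀ t θ, 0 ≤ L t θ) (h0 : ∀ θ, 0 ≤ b 0 θ) (hsum : ∑ θ, b 0 θ = 1) {θ θ' : Θ}
    (hθ' : 0 < b 0 θ') (hLθ' : ∀ t, 0 < L t θ') (t : ℕ) :
    b t θ ≤ b 0 θ / b 0 θ' * ∏ i ∈ range t, (L i θ / L i θ') := by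
  have hpos : 0 < b 0 θ' * ∏ i ∈ range t, L i θ' :=
    mul_pos hθ' (prod_pos fun i _ => hLθ' i)
  calc b t θ = b t θ' * (b 0 θ * ∏ i ∈ range t, L i θ) / (b 0 θ' * ∏ i ∈ range t, L i θ') :=
        eq_div_of_mul_eq hpos.ne' (bayes_mul_prod_eq hb θ θ' t)
    _ ≤ (b 0 θ * ∏ i ∈ range t, L i θ) / (b 0 θ' * ∏ i ∈ range t, L i θ') :=
        div_le_div_of_nonneg_right (mul_le_of_le_one_left
          (mul_nonneg (h0 θ) (prod_nonneg fun i _ => hL i θ))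
          (bayes_le_one hb hL h0 hsum t θ')) hpos.le
    _ = b 0 θ / b 0 θ' * ∏ i ∈ range t, (L i θ / L i θ') := by
        rw [prod_div_distrib, mul_div_mul_comm]

lemma tendsto_bayes_zero_of_tendsto_prod_sqrt (hb : ∀ t, b (t + 1) = bayesUpdate (L t) (b t))
    (hL : ∀ t θ, 0 ≤ L t θ) (h0 : ∀ θ, 0 ≤ b 0 θ) (hsum : ∑ θ, b 0 θ = 1) {θ θ' : Θ}
    (hθ' : 0 < b 0 θ') (hLθ' : ∀ t, 0 < L t θ')
    (hZ : Tendsto (fun t => ∏ i ∈ range t, √(L i θ / L i θ')) atTop (𝓝 0)) :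
    Tendsto (fun t => b t θ) atTop (𝓝 0) := by
  have hsq : ∀ t, ∏ i ∈ range t, (L i θ / L i θ') = (∏ i ∈ range t, √(L i θ / L i θ')) ^ 2 :=
    fun t => by
      rw [← prod_pow]
      exact prod_congr rfl fun i _ => (Real.sq_sqrt (div_nonneg (hL i θ) (hL i θ'))).symm
  refine squeeze_zero (bayes_nonneg hb hL h0 · θ)
    (fun t => (bayes_le_mul_prod_div hb hL h0 hsum hθ' hLθ' t).trans_eq (by rw [hsq])) ?_
  simpa using (hZ.pow 2).const_mul (b 0 θ / b 0 θ')

end BayesUpdate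

section FiniteLaw

variable {Ω S : Type*} [MeasurableSpace Ω] {P : Measure Ω} [Fintype S] [MeasurableSpace S]
  [MeasurableSingletonClass S] {X : Ω → S} {w : S → ℝ}

lemma integral_comp_eq_sum_of_law [IsFiniteMeasure P] (hX : Measurable X) (hw : ∀ x, 0 ≤ w x)
    (hlaw : ∀ x, P {ω | X ω = x} = ENNReal.ofReal (w x)) (f : S → ℝ) :
    ∫ ω, f (X ω) ∂P = ∑ x, w x * f x := by
  rw [← integral_map hX.aemeasurable (measurable_of_finite f).aestronglyMeasurable,
    integral_fintype Integrable.of_finite]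
  refine sum_congr rfl fun x _ => ?_
  rw [measureReal_def, Measure.map_apply hX (measurableSet_singleton x), smul_eq_mul]
  simp [Set.preimage, hlaw, hw]

lemma ae_pos_comp_of_law (hX : Measurable X)
    (hlaw : ∀ x, P {ω | X ω = x} = ENNReal.ofReal (w x)) : ∀ᵐ ω ∂P, 0 < w (X ω) := by
  refine ae_of_ae_map (p := fun x => 0 < w x) hX.aemeasurable
    (ae_iff_of_countable.2 fun x hx => ?_)
  rw [Measure.map_apply hX (measurableSet_singleton x)] at hx
  exact not_le.1 fun h => hx (by simpa [Set.preimage, hlaw] using h)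

end FiniteLaw

lemma MeasureTheory.Supermartingale.ae_tendsto_zero {Ω : Type*} {m0 : MeasurableSpace Ω}
    {μ : Measure Ω} [IsFiniteMeasure μ] {ℱ : Filtration ℕ m0} {f : ℕ → Ω → ℝ}
    (hf : Supermartingale f ℱ μ) (hf0 : ∀ n ω, 0 ≤ f n ω)
    (hlim : Tendsto (fun n => ∫ ω, f n ω ∂μ) atTop (𝓝 0)) :
    ∀ᵐ ω ∂μ, Tendsto (fun n => f n ω) atTop (𝓝 0) := by
  have hmeas : ∀ n, Measurable (f n) := fun n =>
    (hf.stronglyMeasurable n).measurable.mono (ℱ.le n) le_rfl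
  have hofReal : ∀ n, ENNReal.ofReal (∫ ω, f n ω ∂μ) = ∫⁻ ω, ENNReal.ofReal (f n ω) ∂μ :=
    fun n => ofReal_integral_eq_lintegral_ofReal (hf.integrable n) (.of_forall (hf0 n))
  have hbdd : ∀ n, eLpNorm (-f n) 1 μ ≤ ENNReal.ofReal (∫ ω, f 0 ω ∂μ) := fun n => by
    rw [eLpNorm_neg, eLpNorm_one_eq_lintegral_enorm]
    calc ∫⁻ ω, ‖f n ω‖ₑ ∂μ = ENNReal.ofReal (∫ ω, f n ω ∂μ) := by
          rw [hofReal]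
          exact lintegral_congr fun ω => Real.enorm_of_nonneg (hf0 n ω)
      _ ≤ ENNReal.ofReal (∫ ω, f 0 ω ∂μ) := ENNReal.ofReal_le_ofReal <| by
          simpa using hf.setIntegral_le (Nat.zero_le n) MeasurableSet.univ
  have hfatou : ∫⁻ ω, liminf (fun n => ENNReal.ofReal (f n ω)) atTop ∂μ = 0 := by
    refine le_antisymm ((lintegral_liminf_le fun n => (hmeas n).ennreal_ofReal).trans ?_) bot_le
    simp_rw [← hofReal]
    rw [(ENNReal.tendsto_ofReal hlim).liminf_eq, ENNReal.ofReal_zero]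
  have hliminf_meas : AEMeasurable (fun ω => liminf (fun n => ENNReal.ofReal (f n ω)) atTop) μ :=
    (Measurable.liminf fun n => (hmeas n).ennreal_ofReal).aemeasurable
  filter_upwards [hf.neg.exists_ae_tendsto_of_bdd hbdd,
    (lintegral_eq_zero_iff' hliminf_meas).1 hfatou] with ω ⟨c, hc⟩ hliminf
  have hc' : Tendsto (fun n => f n ω) atTop (𝓝 (-c)) := by simpa using hc.neg
  have hc0 : -c ≤ 0 := ENNReal.ofReal_eq_zero.1 <|
    (ENNReal.tendsto_ofReal hc').liminf_eq.symm.trans hliminf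
  rwa [le_antisymm hc0 (ge_of_tendsto' hc' fun n => hf0 n ω)] at hc'

section IndependentProducts

variable {Ω S : Type*} {mΩ : MeasurableSpace Ω} {P : Measure Ω} [mS : MeasurableSpace S]
  {X : ℕ → Ω → S}

/-- `pastFiltration X hX n = σ(X 0, …, X (n - 1))`. -/
def pastFiltration (X : ℕ → Ω → S) (hX : ∀ n, Measurable (X n)) : Filtration ℕ mΩ where
  seq n := ⨆ i ∈ Set.Iio n, mS.comap (X i)
  mono' _ _ hnm := biSup_mono fun _ hi => (Set.mem_Iio.1 hi).trans_le hnm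
  le' _ := iSup₂_le fun i _ => (hX i).comap_le

lemma indep_pastFiltration (hX : ∀ n, Measurable (X n)) (hind : iIndepFun X P) (n : ℕ) :
    Indep (pastFiltration X hX n) (mS.comap (X n)) P := by
  have h := indep_iSup_of_disjoint (fun i => (hX i).comap_le) hind.iIndep
    (S := Set.Iio n) (T := {n}) (by simp)
  rw [_root_.iSup_singleton] at h
  exact h

variable [Finite S] [MeasurableSingletonClass S]

lemma measurable_pastFiltration_prod (hX : ∀ n, Measurable (X n)) (g : ℕ → S → ℝ) (n : ℕ) :
    Measurable[pastFiltration X hX n] fun ω => ∏ i ∈ range n, g i (X i ω) :=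
  Finset.measurable_prod _ fun i hi => (measurable_of_finite (g i)).comp <|
    Measurable.of_comap_le <| le_iSup₂ (f := fun i (_ : i ∈ Set.Iio n) => mS.comap (X i)) i
      (mem_range.1 hi)

lemma integrable_prod_range [IsFiniteMeasure P] (hX : ∀ n, Measurable (X n)) (g : ℕ → S → ℝ)
    (n : ℕ) : Integrable (fun ω => ∏ i ∈ range n, g i (X i ω)) P := by
  induction n with
  | zero => simp
  | succ n ih =>
    obtain ⟨c, hc⟩ := (Set.finite_range fun x => ‖g n x‖).bddAbove
    simp_rw [prod_range_succ]
    exact ih.mul_bdd ((measurable_of_finite (g n)).comp (hX n)).aestronglyMeasurable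
      (.of_forall fun ω => hc ⟨X n ω, rfl⟩)

lemma setIntegral_prod_range_succ (hX : ∀ n, Measurable (X n)) (hind : iIndepFun X P)
    (g : ℕ → S → ℝ) (n : ℕ) {A : Set Ω} (hA : MeasurableSet[pastFiltration X hX n] A) :
    ∫ ω in A, ∏ i ∈ range (n + 1), g i (X i ω) ∂P =
      (∫ ω in A, ∏ i ∈ range n, g i (X i ω) ∂P) * ∫ ω, g n (X n ω) ∂P := by
  have hA' : MeasurableSet A := (pastFiltration X hX).le n A hA
  have hZ := measurable_pastFiltration_prod hX g n
  have hgn : Measurable[mS.comap (X n)] fun ω => g n (X n ω) :=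
    (measurable_of_finite (g n)).comp (comap_measurable (X n))
  have hindep : IndepFun (A.indicator fun ω => ∏ i ∈ range n, g i (X i ω))
      (fun ω => g n (X n ω)) P := by
    rw [IndepFun_iff_Indep]
    exact indep_of_indep_of_le_right (indep_of_indep_of_le_left
      (indep_pastFiltration hX hind n) (hZ.indicator hA).comap_le) hgn.comap_le
  simp_rw [← integral_indicator hA', prod_range_succ, Set.indicator_mul_left]
  exact hindep.integral_fun_mul_eq_mul_integral
    ((hZ.mono ((pastFiltration X hX).le n) le_rfl).indicator hA').aestronglyMeasurable
    (hgn.mono (hX n).comap_le le_rfl).aestronglyMeasurable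

lemma supermartingale_prod_range [IsFiniteMeasure P] (hX : ∀ n, Measurable (X n))
    (hind : iIndepFun X P) (g : ℕ → S → ℝ) (hg0 : ∀ n x, 0 ≤ g n x)
    (hg1 : ∀ n, ∫ ω, g n (X n ω) ∂P ≤ 1) :
    Supermartingale (fun n ω => ∏ i ∈ range n, g i (X i ω)) (pastFiltration X hX) P := by
  refine supermartingale_of_setIntegral_succ_le
    (fun n => (measurable_pastFiltration_prod hX g n).stronglyMeasurable)
    (integrable_prod_range hX g) fun n A hA => ?_
  rw [setIntegral_prod_range_succ hX hind g n hA]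
  exact mul_le_of_le_one_right (setIntegral_nonneg ((pastFiltration X hX).le n A hA)
    fun ω _ => prod_nonneg fun i _ => hg0 i _) (hg1 n)

lemma integral_prod_range [IsProbabilityMeasure P] (hX : ∀ n, Measurable (X n))
    (hind : iIndepFun X P) (g : ℕ → S → ℝ) (n : ℕ) :
    ∫ ω, ∏ i ∈ range n, g i (X i ω) ∂P = ∏ i ∈ range n, ∫ ω, g i (X i ω) ∂P := by
  induction n with
  | zero => simp
  | succ n ih =>
    rw [← setIntegral_univ, setIntegral_prod_range_succ hX hind g n MeasurableSet.univ,
      setIntegral_univ, ih, prod_range_succ]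

lemma ae_tendsto_prod_range_zero [IsProbabilityMeasure P] (hX : ∀ n, Measurable (X n))
    (hind : iIndepFun X P) (g : ℕ → S → ℝ) (hg0 : ∀ n x, 0 ≤ g n x)
    (hg1 : ∀ n, ∫ ω, g n (X n ω) ∂P ≤ 1)
    (hlim : Tendsto (fun n => ∏ i ∈ range n, ∫ ω, g i (X i ω) ∂P) atTop (𝓝 0)) :
    ∀ᵐ ω ∂P, Tendsto (fun n => ∏ i ∈ range n, g i (X i ω)) atTop (𝓝 0) :=
  (supermartingale_prod_range hX hind g hg0 hg1).ae_tendsto_zero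
    (fun n ω => prod_nonneg fun i _ => hg0 i _)
    (by simpa only [integral_prod_range hX hind] using hlim)

end IndependentProducts

theorem local_belief_false_hypothesis_tendsto_zero_general
    {Θ : Type*} [Fintype Θ] (θstar : Θ)
    {Q : Type*} [Fintype Q]
    {S : Type*} [Fintype S] [MeasurableSpace S] [MeasurableSingletonClass S]
    (l : Θ → Q → S → ℝ)
    (hl_nonneg : ∀ θ q s, 0 ≤ l θ q s)
    (hl_sum : ∀ θ q, ∑ s, l θ q s = 1)
    (q : ℕ → Q)
    {Ω : Type*} [MeasurableSpace Ω] (P : Measure Ω) [IsProbabilityMeasure P]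
    (s : ℕ → Ω → S)
    (hs_meas : ∀ t, 1 ≤ t → Measurable (s t))
    (hs_law : ∀ t, 1 ≤ t → ∀ x, P {ω | s t ω = x} = ENNReal.ofReal (l θstar (q t) x))
    (hs_indep : ProbabilityTheory.iIndepFun
      (fun (t : {t : ℕ // 1 ≤ t}) => s t.1) P)
    (b : ℕ → Θ → Ω → ℝ)
    (b0 : Θ → ℝ)
    (hb0_nonneg : ∀ θ, 0 ≤ b0 θ) (hb0_sum : ∑ θ, b0 θ = 1)
    (hb_init : ∀ θ ω, b 0 θ ω = b0 θ)
    (hb_upd : ∀ t θ ω, b (t + 1) θ ω =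
      l θ (q (t + 1)) (s (t + 1) ω) * b t θ ω /
        ∑ θ', l θ' (q (t + 1)) (s (t + 1) ω) * b t θ' ω)
    (θ : Θ)
    (hb0_star : 0 < b0 θstar)
    (hsource : {t : ℕ | 0 < klDivFin (l θ (q t)) (l θstar (q t))}.Infinite) :
    ∀ᵐ ω ∂P, Tendsto (fun t => b t θ ω) atTop (nhds 0) := by
  set X : ℕ → Ω → S := fun n => s (n + 1)
  have hX : ∀ n, Measurable (X n) := fun n => hs_meas _ n.succ_pos
  have hind : iIndepFun X P :=
    hs_indep.precomp (g := fun n => ⟨n + 1, n.succ_pos⟩) fun m n h => by simpa using h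
  set g : ℕ → S → ℝ := fun n x => √(l θ (q (n + 1)) x / l θstar (q (n + 1)) x)
  have hmean : ∀ n, ∫ ω, g n (X n ω) ∂P =
      bhattacharyya (l θ (q (n + 1))) (l θstar (q (n + 1))) := fun n =>
    integral_comp_eq_sum_of_law (hX n) (hl_nonneg _ _) (hs_law _ n.succ_pos) (g n)
  have hρ := tendsto_prod_bhattacharyya_zero (hl_nonneg θ) (hl_nonneg θstar) (hl_sum θ)
    (hl_sum θstar) q hsource
  simp only [← hmean] at hρ
  have hZ := ae_tendsto_prod_range_zero hX hind g (fun n x => Real.sqrt_nonneg _)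
    (fun n => (hmean n).trans_le (bhattacharyya_le_one (hl_nonneg _ _) (hl_nonneg _ _)
      (hl_sum _ _) (hl_sum _ _))) hρ
  filter_upwards [hZ, ae_all_iff.2 fun n => ae_pos_comp_of_law (hX n) (hs_law _ n.succ_pos)]
    with ω hZω hpos
  exact tendsto_bayes_zero_of_tendsto_prod_sqrt (b := fun t θ' => b t θ' ω)
    (fun t => funext fun θ' => hb_upd t θ' ω) (fun t θ' => hl_nonneg _ _ _)
    (fun θ' => hb_init θ' ω ▸ hb0_nonneg θ') (by simpa only [hb_init] using hb0_sum)
    (hb_init θstar ω ▸ hb0_star) hpos hZω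

/-- **Local beliefs on distinguishable false hypotheses vanish (Lemma 1, first part).**
`Θ` is a finite nonempty set of hypotheses with true hypothesis `θ* ∈ Θ`; `Q` a finite set of
states; `S` a finite set of observations; `l` a likelihood function (nonnegative, summing to one
over `S` for every `θ, q`); `(q_t)` a fixed deterministic state path; the observations
`(s_t)_{t ≥ 1}` are mutually independent with `s_t` distributed according to `l(·|θ*,q_t)`; the
local beliefs evolve from a probability vector `b_0` by the Bayesian update. Let `θ ≠ θ*`. If
`b_0(θ*) > 0` and `q_t ∈ O(θ,θ*) = {q | D(l(·|θ,q) ‖ l(·|θ*,q)) > 0}` for infinitely many `t`,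
then `b_t(θ) → 0` almost surely. -/
theorem local_belief_false_hypothesis_tendsto_zero
    {Θ : Type*} [Fintype Θ] [Nonempty Θ] (θstar : Θ)
    {Q : Type*} [Fintype Q]
    {S : Type*} [Fintype S] [Nonempty S] [MeasurableSpace S] [MeasurableSingletonClass S]
    (l : Θ → Q → S → ℝ)
    (hl_nonneg : ∀ θ q s, 0 ≤ l θ q s)
    (hl_sum : ∀ θ q, ∑ s, l θ q s = 1)
    (q : ℕ → Q)
    {Ω : Type*} [MeasurableSpace Ω] (P : Measure Ω) [IsProbabilityMeasure P]
    (s : ℕ → Ω → S)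
    (hs_meas : ∀ t, 1 ≤ t → Measurable (s t))
    (hs_law : ∀ t, 1 ≤ t → ∀ x, P {ω | s t ω = x} = ENNReal.ofReal (l θstar (q t) x))
    (hs_indep : ProbabilityTheory.iIndepFun
      (fun (t : {t : ℕ // 1 ≤ t}) => s t.1) P)
    (b : ℕ → Θ → Ω → ℝ)
    (b0 : Θ → ℝ)
    (hb0_nonneg : ∀ θ, 0 ≤ b0 θ) (hb0_sum : ∑ θ, b0 θ = 1)
    (hb_init : ∀ θ ω, b 0 θ ω = b0 θ)
    (hb_upd : ∀ t θ ω, b (t + 1) θ ω =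
      l θ (q (t + 1)) (s (t + 1) ω) * b t θ ω /
        ∑ θ', l θ' (q (t + 1)) (s (t + 1) ω) * b t θ' ω)
    (θ : Θ) (hθ : θ ≠ θstar)
    (hb0_star : 0 < b0 θstar)
    (hsource : {t : ℕ | 0 < klDivFin (l θ (q t)) (l θstar (q t))}.Infinite) :
    ∀ᵐ ω ∂P, Tendsto (fun t => b t θ ω) atTop (nhds 0) :=
  local_belief_false_hypothesis_tendsto_zero_general θstar l hl_nonneg hl_sum q P s hs_meas hs_law
    hs_indep b b0 hb0_nonneg hb0_sum hb_init hb_upd θ hb0_star hsource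
end

section
/- Under SDHT with initial beliefs satisfying b^l_{i,0}(θ) > 0 and b^a_{i,0}(θ) > 0 for every hypothesis θ ∈ Θ and every agent i, for every good agent i ∈ G it holds almost surely that b^a_{i,t}(θ*) > 0 for every t ∈ ℕ, for every choice of the bad agents' shared values. -/
/-!
Almost surely every observation of a good agent has positive likelihood under `θ*`, so
Bayesian updating keeps every local belief positive at `θ*`. The actual beliefs of the good
agents then stay positive at `θ*` by induction on time: in case two the pre-normalized value is
a minimum of two positive numbers; in case one it is a minimum of the local belief and shared
values kept after trimming, and a kept value `≤ 0` would make the kept agent and the `f`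
trimmed agents (whose values are no larger) bad, i.e. `f + 1` bad neighbours.
-/

open MeasureTheory Filter

theorem ae_pos_of_measure_fiber_eq_ofReal {Ω α : Type*} [MeasurableSpace Ω] [Countable α]
    {μ : Measure Ω} {X : Ω → α} {p : α → ℝ}
    (h : ∀ s, μ {ω | X ω = s} = ENNReal.ofReal (p s)) : ∀ᵐ ω ∂μ, 0 < p (X ω) := by
  have hset : {ω | ¬ 0 < p (X ω)} = ⋃ s ∈ {s | p s ≤ 0}, {ω | X ω = s} := by
    ext ω; simp
  rw [ae_iff, hset, measure_biUnion_null_iff (Set.to_countable _)]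
  intro s hs
  rw [h, ENNReal.ofReal_eq_zero.2 hs]

section Normalize

variable {Θ : Type*} [Fintype Θ] {v : Θ → ℝ}

theorem div_sum_nonneg (hv : 0 ≤ v) : 0 ≤ fun θ => v θ / ∑ θ', v θ' :=
  fun θ => div_nonneg (hv θ) (Finset.sum_nonneg fun θ' _ => hv θ')

theorem div_sum_pos (hv : 0 ≤ v) {θ : Θ} (hθ : 0 < v θ) : 0 < v θ / ∑ θ', v θ' :=
  div_pos hθ (hθ.trans_le (Finset.single_le_sum (fun θ' _ => hv θ') (Finset.mem_univ θ)))

end Normalize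

theorem bayes_iterate_nonneg_pos {Θ : Type*} [Fintype Θ] {θ : Θ} {L b : ℕ → Θ → ℝ}
    (hL : ∀ t, 0 ≤ L (t + 1)) (hLθ : ∀ t, 0 < L (t + 1) θ)
    (hb0 : 0 ≤ b 0) (hb0θ : 0 < b 0 θ)
    (hb : ∀ t θ', b (t + 1) θ' = L (t + 1) θ' * b t θ' / ∑ θ'', L (t + 1) θ'' * b t θ'') :
    ∀ t, 0 ≤ b t ∧ 0 < b t θ := by
  intro t
  induction t with
  | zero => exact ⟨hb0, hb0θ⟩
  | succ t ih =>
    have hprod : 0 ≤ L (t + 1) * b t := mul_nonneg (hL t) ih.1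
    rw [show b (t + 1) = _ from funext (hb t)]
    exact ⟨div_sum_nonneg hprod, div_sum_pos hprod (mul_pos (hLθ t) ih.2)⟩

theorem sInf_insert_image_of_forall {ι : Type*} {P : ℝ → Prop} {a : ℝ} {x : ι → ℝ}
    {R : Finset ι} (ha : P a) (hx : ∀ r ∈ R, P (x r)) : P (sInf (insert a (x '' R))) := by
  obtain h | ⟨r, hr, h⟩ :=
    (Set.insert_nonempty a _).csInf_mem ((R.finite_toSet.image x).insert a)
  · rwa [h]
  · rw [← h]; exact hx r hr

theorem pos_of_mem_trimmed {ι : Type*} [DecidableEq ι] {N R G : Finset ι} {f : ℕ}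
    {x : ι → ℝ} (hRN : R ⊆ N) (hRcard : R.card = N.card - f)
    (hlow : ∀ j ∈ N, j ∉ R → ∀ r ∈ R, x j ≤ x r)
    (hbad : (N \ G).card ≤ f) (hG : ∀ j ∈ G, 0 < x j) : ∀ r ∈ R, 0 < x r := by
  intro r hr
  by_contra! hr0
  have hrG : r ∉ G := fun h => (hG r h).not_ge hr0
  have htrimmed : N \ R ⊆ N \ G := fun j hj => by
    rw [Finset.mem_sdiff] at hj ⊢
    exact ⟨hj.1, fun hjG => (hG j hjG).not_ge ((hlow j hj.1 hj.2 r hr).trans hr0)⟩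
  have hsub : insert r (N \ R) ⊆ N \ G :=
    Finset.insert_subset (Finset.mem_sdiff.2 ⟨hRN hr, hrG⟩) htrimmed
  have hcard := Finset.card_le_card hsub
  have hRpos : 0 < R.card := Finset.card_pos.2 ⟨r, hr⟩
  rw [Finset.card_insert_of_notMem (fun h => (Finset.mem_sdiff.1 h).2 hr),
    Finset.card_sdiff_of_subset hRN] at hcard
  omega

theorem actual_belief_nonneg_pos {𝒩 Θ : Type*} [DecidableEq 𝒩] [Fintype Θ]
    {G : Finset 𝒩} {f : ℕ} {θstar : Θ} {Nbr : 𝒩 → ℕ → Finset 𝒩}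
    {CaseOne : 𝒩 → ℕ → Θ → Prop} {Rsel : 𝒩 → ℕ → Θ → Finset 𝒩}
    {bl ba btilde share : 𝒩 → ℕ → Θ → ℝ}
    (hNbr_bad : ∀ j ∈ G, ∀ t, (Nbr j t \ G).card ≤ f)
    (hbl : ∀ j ∈ G, ∀ t, 0 ≤ bl j t ∧ 0 < bl j t θstar)
    (hba0 : ∀ j ∈ G, 0 ≤ ba j 0 ∧ 0 < ba j 0 θstar)
    (hshare_good : ∀ j ∈ G, ∀ t, share j t = ba j t)
    (hshare_bad : ∀ j ∉ G, ∀ t, 0 ≤ share j t)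
    (hcase1 : ∀ j ∈ G, ∀ t θ, CaseOne j (t + 1) θ →
      Rsel j (t + 1) θ ⊆ Nbr j (t + 1) ∧
      (Rsel j (t + 1) θ).card = (Nbr j (t + 1)).card - f ∧
      (∀ k ∈ Nbr j (t + 1), k ∉ Rsel j (t + 1) θ →
        ∀ r ∈ Rsel j (t + 1) θ, share k t θ ≤ share r t θ) ∧
      btilde j (t + 1) θ =
        sInf (insert (bl j (t + 1) θ) ((fun k => share k t θ) '' (Rsel j (t + 1) θ : Set 𝒩))))
    (hcase2 : ∀ j ∈ G, ∀ t θ, ¬ CaseOne j (t + 1) θ →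
      btilde j (t + 1) θ = min (ba j t θ) (bl j (t + 1) θ))
    (hnorm : ∀ j ∈ G, ∀ t θ,
      ba j (t + 1) θ = btilde j (t + 1) θ / ∑ θ', btilde j (t + 1) θ') :
    ∀ t, ∀ j ∈ G, 0 ≤ ba j t ∧ 0 < ba j t θstar := by
  intro t
  induction t with
  | zero => exact hba0
  | succ t ih =>
    intro j hj
    have hshare_nonneg : ∀ k, 0 ≤ share k t := fun k => by
      by_cases hk : k ∈ G
      · exact hshare_good k hk t ▸ (ih k hk).1
      · exact hshare_bad k hk t
    have hbtilde_nonneg : 0 ≤ btilde j (t + 1) := fun θ => by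
      by_cases hc : CaseOne j (t + 1) θ
      · rw [(hcase1 j hj t θ hc).2.2.2]
        exact sInf_insert_image_of_forall ((hbl j hj _).1 θ) fun k _ => hshare_nonneg k θ
      · rw [hcase2 j hj t θ hc]
        exact le_min ((ih j hj).1 θ) ((hbl j hj _).1 θ)
    have hbtilde_pos : 0 < btilde j (t + 1) θstar := by
      by_cases hc : CaseOne j (t + 1) θstar
      · obtain ⟨hRN, hRcard, hlow, heq⟩ := hcase1 j hj t θstar hc
        rw [heq]
        exact sInf_insert_image_of_forall (hbl j hj _).2 <|
          pos_of_mem_trimmed hRN hRcard hlow (hNbr_bad j hj _)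
            fun k hk => hshare_good k hk t ▸ (ih k hk).2
      · rw [hcase2 j hj t θstar hc]
        exact lt_min (ih j hj).2 (hbl j hj _).2
    rw [show ba j (t + 1) = _ from funext (hnorm j hj t)]
    exact ⟨div_sum_nonneg hbtilde_nonneg, div_sum_pos hbtilde_nonneg hbtilde_pos⟩

theorem sdht_actual_belief_true_pos_general
    -- agents
    {𝒩 : Type*} [DecidableEq 𝒩]
    (G : Finset 𝒩) (f : ℕ)
    -- hypotheses
    {Θ : Type*} [Fintype Θ] (θstar : Θ)
    -- states
    {Q : Type*}
    -- observations
    {Obs : 𝒩 → Type*} [∀ i, Fintype (Obs i)]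
    -- likelihood functions and state paths
    (l : (i : 𝒩) → Θ → Q → Obs i → ℝ)
    (q : 𝒩 → ℕ → Q)
    (hl_nonneg : ∀ i ∈ G, ∀ θ qq s, 0 ≤ l i θ qq s)
    -- probability space and observations of the good agents
    {Ω : Type*} [MeasurableSpace Ω] (P : Measure Ω)
    (obs : (i : 𝒩) → ℕ → Ω → Obs i)
    (hobs_law : ∀ i ∈ G, ∀ t, 1 ≤ t → ∀ s,
      P {ω | obs i t ω = s} = ENNReal.ofReal (l i θstar (q i t) s))
    -- time-varying neighbor map, with at most `f` bad neighbors of a good agent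
    (Nbr : 𝒩 → ℕ → Finset 𝒩)
    (hNbr_bad : ∀ i ∈ G, ∀ t, ((Nbr i t : Set 𝒩) \ (G : Set 𝒩)).ncard ≤ f)
    -- the (deterministic) case-one predicate
    (CaseOne : 𝒩 → ℕ → Θ → Prop)
    -- arbitrary shared values of the bad agents (Byzantine adversary model)
    (badShare : 𝒩 → ℕ → Θ → Ω → ℝ)
    (hbad_mem : ∀ j t θ ω, badShare j t θ ω ∈ Set.Icc (0 : ℝ) 1)
    -- local beliefs, actual beliefs, pre-normalization actual beliefs, shared values
    (bl ba btilde : 𝒩 → ℕ → Θ → Ω → ℝ)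
    (share : 𝒩 → ℕ → Θ → Ω → ℝ)
    (hshare : ∀ j t θ ω,
      share j t θ ω = if j ∈ G then ba j t θ ω else badShare j t θ ω)
    -- initialization: deterministic probability vectors
    (b0l b0a : 𝒩 → Θ → ℝ)
    (hbl_init : ∀ i ∈ G, ∀ θ ω, bl i 0 θ ω = b0l i θ)
    (hba_init : ∀ i ∈ G, ∀ θ ω, ba i 0 θ ω = b0a i θ)
    -- (i) local Bayesian update
    (hbl_upd : ∀ i ∈ G, ∀ t θ ω,
      bl i (t + 1) θ ω =
        l i θ (q i (t + 1)) (obs i (t + 1) ω) * bl i t θ ω /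
          ∑ θ', l i θ' (q i (t + 1)) (obs i (t + 1) ω) * bl i t θ' ω)
    -- (ii) case one: trim the `f` lowest shared values, take the minimum of the rest
    (Rsel : 𝒩 → ℕ → Θ → Ω → Finset 𝒩)
    (hcase1 : ∀ i ∈ G, ∀ t θ ω, CaseOne i (t + 1) θ →
      Rsel i (t + 1) θ ω ⊆ Nbr i (t + 1) ∧
      (Rsel i (t + 1) θ ω).card = (Nbr i (t + 1)).card - f ∧
      (∀ j ∈ Nbr i (t + 1), j ∉ Rsel i (t + 1) θ ω →
        ∀ r ∈ Rsel i (t + 1) θ ω, share j t θ ω ≤ share r t θ ω) ∧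
      btilde i (t + 1) θ ω =
        sInf (insert (bl i (t + 1) θ ω)
          ((fun j => share j t θ ω) '' (Rsel i (t + 1) θ ω : Set 𝒩))))
    -- (ii) case two
    (hcase2 : ∀ i ∈ G, ∀ t θ ω, ¬ CaseOne i (t + 1) θ →
      btilde i (t + 1) θ ω = min (ba i t θ ω) (bl i (t + 1) θ ω))
    -- (iii) normalization
    (hnorm : ∀ i ∈ G, ∀ t θ ω,
      ba i (t + 1) θ ω = btilde i (t + 1) θ ω / ∑ θ', btilde i (t + 1) θ' ω)
    -- theorem hypothesis (1): positive initial beliefs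
    (hinit_pos : ∀ i θ, 0 < b0l i θ ∧ 0 < b0a i θ)
 :
    ∀ i ∈ G, ∀ᵐ ω ∂P, ∀ t : ℕ, 0 < ba i t θstar ω := by
  intro i hi
  have hlik : ∀ᵐ ω ∂P, ∀ j ∈ G, ∀ t, 0 < l j θstar (q j (t + 1)) (obs j (t + 1) ω) :=
    (eventually_all_finset G).2 fun j hj => ae_all_iff.2 fun t =>
      ae_pos_of_measure_fiber_eq_ofReal (hobs_law j hj (t + 1) (Nat.le_add_left 1 t))
  filter_upwards [hlik] with ω hω
  have hbl : ∀ j ∈ G, ∀ t, 0 ≤ (bl j t · ω) ∧ 0 < bl j t θstar ω := fun j hj =>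
    bayes_iterate_nonneg_pos (L := fun t θ => l j θ (q j t) (obs j t ω))
      (fun _ θ => hl_nonneg j hj θ _ _) (hω j hj)
      (fun θ => by simpa [hbl_init j hj] using (hinit_pos j θ).1.le)
      (by simpa [hbl_init j hj] using (hinit_pos j θstar).1) (hbl_upd j hj · · ω)
  have hba := actual_belief_nonneg_pos (ba := (ba · · · ω)) (Rsel := (Rsel · · · ω))
    (btilde := (btilde · · · ω)) (share := (share · · · ω))
    (fun j hj t => by simpa only [← Finset.coe_sdiff, Set.ncard_coe_finset] using hNbr_bad j hj t)
    hbl (fun j hj => ⟨fun θ => by simpa [hba_init j hj] using (hinit_pos j θ).2.le,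
      by simpa [hba_init j hj] using (hinit_pos j θstar).2⟩)
    (fun j hj t => funext fun θ => by simp [hshare, hj])
    (fun j hj t θ => by simpa [hshare, hj] using (hbad_mem j t θ ω).1)
    (hcase1 · · · · ω) (hcase2 · · · · ω) (hnorm · · · · ω)
  exact fun t => (hba t i hi).2

/-- **Positivity of the actual belief on the true hypothesis under SDHT (Lemma 2).**
Under the SDHT setting and update rule (see the hypotheses: Bayesian local update; case one for
`(i,θ)` at time `t` iff `|Spair θ θ' ∩ Nbr i t| ≥ 2f+1` for every `θ' ≠ θ`, in which case the `f`
lowest shared values are removed and the minimum of the remaining shared values and the local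
belief is taken; otherwise the minimum of the previous actual belief and the new local belief is
taken; then the result is normalized), with initial local and actual beliefs positive on every
hypothesis for every agent, for every good agent `i ∈ G` it holds almost surely that
`b^a_{i,t}(θ*) > 0` for every `t ∈ ℕ`, for every choice of the bad agents' shared values. -/
theorem sdht_actual_belief_true_pos
    -- agents
    {𝒩 : Type*} [Fintype 𝒩] [DecidableEq 𝒩]
    (G : Finset 𝒩) (f : ℕ)
    -- hypotheses
    {Θ : Type*} [Fintype Θ] [Nonempty Θ] (θstar : Θ)
    -- states
    {Q : Type*} [Fintype Q]
    -- observations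
    {Obs : 𝒩 → Type*} [∀ i, Fintype (Obs i)]
    [∀ i, MeasurableSpace (Obs i)] [∀ i, MeasurableSingletonClass (Obs i)]
    -- likelihood functions and state paths
    (l : (i : 𝒩) → Θ → Q → Obs i → ℝ)
    (q : 𝒩 → ℕ → Q)
    (hl_nonneg : ∀ i ∈ G, ∀ θ qq s, 0 ≤ l i θ qq s)
    (hl_sum : ∀ i ∈ G, ∀ θ qq, ∑ s, l i θ qq s = 1)
    -- probability space and observations of the good agents
    {Ω : Type*} [MeasurableSpace Ω] (P : Measure Ω) [IsProbabilityMeasure P]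
    (obs : (i : 𝒩) → ℕ → Ω → Obs i)
    (hobs_meas : ∀ i ∈ G, ∀ t, 1 ≤ t → Measurable (obs i t))
    (hobs_law : ∀ i ∈ G, ∀ t, 1 ≤ t → ∀ s,
      P {ω | obs i t ω = s} = ENNReal.ofReal (l i θstar (q i t) s))
    (hobs_indep : ProbabilityTheory.iIndepFun
      (fun p : {p : 𝒩 × ℕ // p.1 ∈ G ∧ 1 ≤ p.2} => obs p.1.1 p.1.2) P)
    -- source-agent sets
    (Spair : Θ → Θ → Set 𝒩)
    (hSpair : ∀ θ θ', Spair θ θ' =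
      {i : 𝒩 | {t : ℕ | 0 < klDivFin (l i θ (q i t)) (l i θ' (q i t))}.Infinite})
    -- time-varying neighbor map, with at most `f` bad neighbors of a good agent
    (Nbr : 𝒩 → ℕ → Finset 𝒩)
    (hNbr_self : ∀ i t, i ∈ Nbr i t)
    (hNbr_bad : ∀ i ∈ G, ∀ t, ((Nbr i t : Set 𝒩) \ (G : Set 𝒩)).ncard ≤ f)
    -- the (deterministic) case-one predicate
    (CaseOne : 𝒩 → ℕ → Θ → Prop)
    (hCaseOne : ∀ i t θ, CaseOne i t θ ↔
      ∀ θ' ≠ θ, 2 * f + 1 ≤ (Spair θ θ' ∩ (Nbr i t : Set 𝒩)).ncard)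
    -- arbitrary shared values of the bad agents (Byzantine adversary model)
    (badShare : 𝒩 → ℕ → Θ → Ω → ℝ)
    (hbad_meas : ∀ j t θ, Measurable (badShare j t θ))
    (hbad_mem : ∀ j t θ ω, badShare j t θ ω ∈ Set.Icc (0 : ℝ) 1)
    -- local beliefs, actual beliefs, pre-normalization actual beliefs, shared values
    (bl ba btilde : 𝒩 → ℕ → Θ → Ω → ℝ)
    (share : 𝒩 → ℕ → Θ → Ω → ℝ)
    (hshare : ∀ j t θ ω,
      share j t θ ω = if j ∈ G then ba j t θ ω else badShare j t θ ω)
    -- initialization: deterministic probability vectors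
    (b0l b0a : 𝒩 → Θ → ℝ)
    (hbl_init : ∀ i ∈ G, ∀ θ ω, bl i 0 θ ω = b0l i θ)
    (hba_init : ∀ i ∈ G, ∀ θ ω, ba i 0 θ ω = b0a i θ)
    (hb0l_sum : ∀ i ∈ G, ∑ θ, b0l i θ = 1)
    (hb0a_sum : ∀ i ∈ G, ∑ θ, b0a i θ = 1)
    -- (i) local Bayesian update
    (hbl_upd : ∀ i ∈ G, ∀ t θ ω,
      bl i (t + 1) θ ω =
        l i θ (q i (t + 1)) (obs i (t + 1) ω) * bl i t θ ω /
          ∑ θ', l i θ' (q i (t + 1)) (obs i (t + 1) ω) * bl i t θ' ω)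
    -- (ii) case one: trim the `f` lowest shared values, take the minimum of the rest
    (Rsel : 𝒩 → ℕ → Θ → Ω → Finset 𝒩)
    (hcase1 : ∀ i ∈ G, ∀ t θ ω, CaseOne i (t + 1) θ →
      Rsel i (t + 1) θ ω ⊆ Nbr i (t + 1) ∧
      (Rsel i (t + 1) θ ω).card = (Nbr i (t + 1)).card - f ∧
      (∀ j ∈ Nbr i (t + 1), j ∉ Rsel i (t + 1) θ ω →
        ∀ r ∈ Rsel i (t + 1) θ ω, share j t θ ω ≤ share r t θ ω) ∧
      btilde i (t + 1) θ ω =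
        sInf (insert (bl i (t + 1) θ ω)
          ((fun j => share j t θ ω) '' (Rsel i (t + 1) θ ω : Set 𝒩))))
    -- (ii) case two
    (hcase2 : ∀ i ∈ G, ∀ t θ ω, ¬ CaseOne i (t + 1) θ →
      btilde i (t + 1) θ ω = min (ba i t θ ω) (bl i (t + 1) θ ω))
    -- (iii) normalization
    (hnorm : ∀ i ∈ G, ∀ t θ ω,
      ba i (t + 1) θ ω = btilde i (t + 1) θ ω / ∑ θ', btilde i (t + 1) θ' ω)
    -- theorem hypothesis (1): positive initial beliefs
    (hinit_pos : ∀ i θ, 0 < b0l i θ ∧ 0 < b0a i θ)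
 :
    ∀ i ∈ G, ∀ᵐ ω ∂P, ∀ t : ℕ, 0 < ba i t θstar ω :=
  sdht_actual_belief_true_pos_general G f θstar l q hl_nonneg P obs hobs_law Nbr hNbr_bad CaseOne
    badShare hbad_mem bl ba btilde share hshare b0l b0a hbl_init hba_init hbl_upd Rsel hcase1 hcase2
    hnorm hinit_pos
end

section
/- In the average-rule SDHT, at any time t+1 at which case one holds for a good agent i ∈ G and a hypothesis θ ∈ Θ (so that the pairwise disjoint sets ℒ^θ_{i,t+1}, ℋ^θ_{i,t+1}, ℳ^θ_{i,t+1} partitioning N_{i,t+1} are defined), the following holds: for every agent j ∈ ℳ^θ_{i,t+1} and every hypothesis θ' ≠ θ, there exist a good agent j' ∈ N_{i,t+1} with b^a_{j',t}(θ) ≤ b^a_{j,t}(θ) and a good agent j'' ∈ N_{i,t+1} ∩ S(θ,θ') with b^a_{j,t}(θ) ≤ b^a_{j'',t}(θ). -/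
/-!
Both witnesses come from one pigeonhole step: `N` has at most `f` bad agents, so any `f + 1`
agents of `N` include a good one. Below `j`, the `f` agents of `ℒ` together with `j` itself
are `f + 1` agents whose values are at most `v j`; above `j`, the at least `f + 1` source agents
in `ℋ` all have values at least `v j`.
-/

section Pigeonhole

variable {α : Type*}

lemma Set.exists_mem_of_ncard_diff_lt {N G s : Set α} {f : ℕ} (hfin : (N \ G).Finite)
    (hbad : (N \ G).ncard ≤ f) (hsN : s ⊆ N) (hs : f < s.ncard) : ∃ x ∈ s, x ∈ G := by
  obtain ⟨x, hxs, hx⟩ := Set.exists_mem_notMem_of_ncard_lt_ncard (hbad.trans_lt hs) hfin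
  exact ⟨x, hxs, by_contra fun hxG => hx ⟨hsN hxs, hxG⟩⟩

variable {G N : Finset α} {f : ℕ} (v : α → ℝ)
  (hbad : ((N : Set α) \ (G : Set α)).ncard ≤ f)
include hbad

lemma exists_good_le_of_mem_sdiff_lowest [DecidableEq α] {L : Finset α} (hL_sub : L ⊆ N)
    (hL_card : L.card = f) (hL_low : ∀ l ∈ L, ∀ j ∈ N \ L, v l ≤ v j) {j : α} (hj : j ∈ N \ L) :
    ∃ j' ∈ N, j' ∈ G ∧ v j' ≤ v j := by
  obtain ⟨hjN, hjL⟩ := Finset.mem_sdiff.mp hj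
  have hcard : f < ((insert j L : Finset α) : Set α).ncard := by
    rw [Set.ncard_coe_finset, Finset.card_insert_of_notMem hjL, hL_card]
    exact f.lt_succ_self
  obtain ⟨x, hx, hxG⟩ := Set.exists_mem_of_ncard_diff_lt (Set.toFinite _) hbad
    (Finset.coe_subset.mpr (Finset.insert_subset hjN hL_sub)) hcard
  rcases Finset.mem_insert.mp hx with rfl | hxL
  · exact ⟨x, hjN, hxG, le_rfl⟩
  · exact ⟨x, hL_sub hxL, hxG, hL_low x hxL j hj⟩

lemma exists_good_mem_ge_of_le_highest {H : Finset α} {S : Set α} (hH_sub : H ⊆ N)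
    (hH_cover : f + 1 ≤ ((H : Set α) ∩ S).ncard) {j : α} (hj : ∀ h ∈ H, v j ≤ v h) :
    ∃ j'' ∈ N, j'' ∈ G ∧ j'' ∈ S ∧ v j ≤ v j'' := by
  have hsub : (H : Set α) ∩ S ⊆ N :=
    Set.inter_subset_left.trans (Finset.coe_subset.mpr hH_sub)
  obtain ⟨x, ⟨hxH, hxS⟩, hxG⟩ :=
    Set.exists_mem_of_ncard_diff_lt (Set.toFinite _) hbad hsub hH_cover
  exact ⟨x, hH_sub hxH, hxG, hxS, hj x hxH⟩

end Pigeonhole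

theorem avg_sdht_sandwich_general {𝒩 : Type*} [DecidableEq 𝒩]
    (G : Finset 𝒩) (f : ℕ)
    {Θ : Type*}
    (Spair : Θ → Θ → Set 𝒩) (θ : Θ)
    (N : Finset 𝒩)
    (hbad : ((N : Set 𝒩) \ (G : Set 𝒩)).ncard ≤ f)
    (v : 𝒩 → ℝ)
    (L : Finset 𝒩) (hL_sub : L ⊆ N) (hL_card : L.card = f)
    (hL_low : ∀ l ∈ L, ∀ j ∈ N \ L, v l ≤ v j)
    (H : Finset 𝒩) (hH_sub : H ⊆ N \ L)
    (hH_high : ∀ h ∈ H, ∀ j ∈ N \ (L ∪ H), v j ≤ v h)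
    (hH_cover : ∀ θ' ≠ θ, f + 1 ≤ ((H : Set 𝒩) ∩ Spair θ θ').ncard) :
    ∀ j ∈ N \ (L ∪ H), ∀ θ' ≠ θ,
      (∃ j' ∈ N, j' ∈ G ∧ v j' ≤ v j) ∧
      (∃ j'' ∈ N, j'' ∈ G ∧ j'' ∈ Spair θ θ' ∧ v j ≤ v j'') := by
  intro j hj θ' hθ'
  have hjL : j ∈ N \ L := Finset.sdiff_subset_sdiff le_rfl Finset.subset_union_left hj
  exact ⟨exists_good_le_of_mem_sdiff_lowest v hbad hL_sub hL_card hL_low hjL,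
    exists_good_mem_ge_of_le_highest v hbad (hH_sub.trans Finset.sdiff_subset) (hH_cover θ' hθ')
      fun h hh => hH_high h hh j hj⟩

/-- **Sandwich lemma for the average-rule SDHT (Lemma 3).** At any time at which case one holds
for a good agent `i ∈ G` and a hypothesis `θ` (with neighbor set `N = N_{i,t+1}` of which at most
`f` members are bad, shared values `v j = b^a_{j,t}(θ)`, and the pairwise disjoint sets
`L = ℒ^θ_{i,t+1}`, `H = ℋ^θ_{i,t+1}`, `M = N \ (L ∪ H) = ℳ^θ_{i,t+1}` partitioning `N`),
for every agent `j ∈ M` and every hypothesis `θ' ≠ θ`, there exist a good agent `j' ∈ N` with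
`v j' ≤ v j` and a good agent `j'' ∈ N ∩ S(θ,θ')` with `v j ≤ v j''`. -/
theorem avg_sdht_sandwich {𝒩 : Type*} [Fintype 𝒩] [DecidableEq 𝒩]
    (G : Finset 𝒩) (f : ℕ)
    {Θ : Type*} [Fintype Θ] [Nonempty Θ]
    (Spair : Θ → Θ → Set 𝒩) (θ : Θ)
    (i : 𝒩) (hi : i ∈ G)
    (N : Finset 𝒩)
    (hbad : ((N : Set 𝒩) \ (G : Set 𝒩)).ncard ≤ f)
    (v : 𝒩 → ℝ) (hv : ∀ j, v j ∈ Set.Icc (0 : ℝ) 1)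
    (hcase1 : ∀ θ' ≠ θ, 2 * f + 2 ≤ (Spair θ θ' ∩ (N : Set 𝒩)).ncard)
    (L : Finset 𝒩) (hL_sub : L ⊆ N) (hL_card : L.card = f)
    (hL_low : ∀ l ∈ L, ∀ j ∈ N \ L, v l ≤ v j)
    (H : Finset 𝒩) (hH_sub : H ⊆ N \ L)
    (hH_high : ∀ h ∈ H, ∀ j ∈ N \ (L ∪ H), v j ≤ v h)
    (hH_cover : ∀ θ' ≠ θ, f + 1 ≤ ((H : Set 𝒩) ∩ Spair θ θ').ncard)
    (hH_min : ∀ H' ⊆ N \ L,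
      ((∀ h ∈ H', ∀ j ∈ N \ (L ∪ H'), v j ≤ v h) ∧
        (∀ θ' ≠ θ, f + 1 ≤ ((H' : Set 𝒩) ∩ Spair θ θ').ncard)) →
      H.card ≤ H'.card) :
    ∀ j ∈ N \ (L ∪ H), ∀ θ' ≠ θ,
      (∃ j' ∈ N, j' ∈ G ∧ v j' ≤ v j) ∧
      (∃ j'' ∈ N, j'' ∈ G ∧ j'' ∈ Spair θ θ' ∧ v j ≤ v j'') :=
  avg_sdht_sandwich_general G f Spair θ N hbad v L hL_sub hL_card hL_low H hH_sub hH_high hH_cover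
end

section
/- In the average-rule ADHT, at any time t+1 at which case one holds for a good agent i ∈ G and a hypothesis θ ∈ Θ (so that the pairwise disjoint sets ℒ^θ_i, ℋ^θ_i, ℳ^θ_i partitioning the collected set 𝒩^θ_i are defined), the following holds: for every agent j ∈ ℳ^θ_i and every hypothesis θ' ≠ θ, there exist a good agent j' ∈ 𝒩^θ_i with stored value b^a_{j'}(θ) ≤ b^a_j(θ) and a good agent j'' ∈ 𝒩^θ_i ∩ S(θ,θ') with b^a_j(θ) ≤ b^a_{j''}(θ). -/
/-! Since `C` holds at most `f` bad agents, any `f + 1` agents of `C` include a good one. The `f`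
lowest agents `L` together with `j` are `f + 1` agents, none above `j`; the agents of `H` in
`S(θ,θ')` are at least `f + 1`, none below `j`. -/

theorem Set.exists_mem_of_ncard_diff_le {α : Type*} {A C G : Set α} {f : ℕ} (hC : C.Finite)
    (hAC : A ⊆ C) (hbad : (C \ G).ncard ≤ f) (hA : f < A.ncard) : ∃ x ∈ A, x ∈ G := by
  by_contra! hAG
  have : A.ncard ≤ (C \ G).ncard := Set.ncard_le_ncard (fun x hx => ⟨hAC hx, hAG x hx⟩) hC.sdiff
  omega

section Sandwich

variable {𝒩 β : Type*} [DecidableEq 𝒩] [Preorder β] {G C L H : Finset 𝒩} {f : ℕ} {v : 𝒩 → β}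
  {j : 𝒩}

theorem exists_good_le_of_notMem_lowest (hbad : ((C : Set 𝒩) \ G).ncard ≤ f) (hLC : L ⊆ C)
    (hL_card : L.card = f) (hL_low : ∀ l ∈ L, ∀ k ∈ C \ L, v l ≤ v k) (hj : j ∈ C \ L) :
    ∃ j' ∈ C, j' ∈ G ∧ v j' ≤ v j := by
  obtain ⟨hjC, hjL⟩ := Finset.mem_sdiff.mp hj
  have hcard : f < ((insert j L : Finset 𝒩) : Set 𝒩).ncard := by
    rw [Set.ncard_coe_finset, Finset.card_insert_of_notMem hjL, hL_card]
    exact f.lt_succ_self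
  have hsub : ((insert j L : Finset 𝒩) : Set 𝒩) ⊆ C :=
    Finset.coe_subset.mpr (Finset.insert_subset hjC hLC)
  obtain ⟨x, hx, hxG⟩ := Set.exists_mem_of_ncard_diff_le C.finite_toSet hsub hbad hcard
  rcases Finset.mem_insert.mp hx with rfl | hxL
  · exact ⟨x, hjC, hxG, le_rfl⟩
  · exact ⟨x, hLC hxL, hxG, hL_low x hxL j hj⟩

theorem exists_good_mem_ge_of_notMem_highest {S : Set 𝒩} (hbad : ((C : Set 𝒩) \ G).ncard ≤ f)
    (hHC : H ⊆ C) (hH_high : ∀ h ∈ H, ∀ k ∈ C \ (L ∪ H), v k ≤ v h)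
    (hH_cover : f + 1 ≤ ((H : Set 𝒩) ∩ S).ncard) (hj : j ∈ C \ (L ∪ H)) :
    ∃ j'' ∈ C, j'' ∈ G ∧ j'' ∈ S ∧ v j ≤ v j'' := by
  have hsub : (H : Set 𝒩) ∩ S ⊆ C := fun x hx => hHC hx.1
  obtain ⟨x, ⟨hxH, hxS⟩, hxG⟩ :=
    Set.exists_mem_of_ncard_diff_le C.finite_toSet hsub hbad hH_cover
  exact ⟨x, hHC hxH, hxG, hxS, hH_high x hxH j hj⟩

end Sandwich

theorem avg_adht_sandwich_general {𝒩 : Type*} [DecidableEq 𝒩]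
    (G : Finset 𝒩) (f : ℕ)
    {Θ : Type*}
    (Spair : Θ → Θ → Set 𝒩) (θ : Θ)
    (C : Finset 𝒩)
    (hbad : ((C : Set 𝒩) \ (G : Set 𝒩)).ncard ≤ f)
    (v : 𝒩 → ℝ)
    (L : Finset 𝒩) (hL_sub : L ⊆ C) (hL_card : L.card = f)
    (hL_low : ∀ l ∈ L, ∀ j ∈ C \ L, v l ≤ v j)
    (H : Finset 𝒩) (hH_sub : H ⊆ C \ L)
    (hH_high : ∀ h ∈ H, ∀ j ∈ C \ (L ∪ H), v j ≤ v h)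
    (hH_cover : ∀ θ' ≠ θ, f + 1 ≤ ((H : Set 𝒩) ∩ Spair θ θ').ncard) :
    ∀ j ∈ C \ (L ∪ H), ∀ θ' ≠ θ,
      (∃ j' ∈ C, j' ∈ G ∧ v j' ≤ v j) ∧
      (∃ j'' ∈ C, j'' ∈ G ∧ j'' ∈ Spair θ θ' ∧ v j ≤ v j'') := by
  intro j hj θ' hθ'
  have hjL : j ∈ C \ L := Finset.sdiff_subset_sdiff le_rfl Finset.subset_union_left hj
  exact ⟨exists_good_le_of_notMem_lowest hbad hL_sub hL_card hL_low hjL,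
    exists_good_mem_ge_of_notMem_highest hbad (hH_sub.trans Finset.sdiff_subset) hH_high
      (hH_cover θ' hθ') hj⟩

/-- **Sandwich lemma for the average-rule ADHT (Lemma 4).** At any time at which case one holds
for a good agent `i ∈ G` and a hypothesis `θ` (with collected agent set `C = 𝒩^θ_i` of which at
most `f` members are bad, stored values `v j = b^a_j(θ)`, and the pairwise disjoint sets
`L = ℒ^θ_i`, `H = ℋ^θ_i`, `M = C \ (L ∪ H) = ℳ^θ_i` partitioning `C`), for every agent `j ∈ M`
and every hypothesis `θ' ≠ θ`, there exist a good agent `j' ∈ C` with stored value `v j' ≤ v j`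
and a good agent `j'' ∈ C ∩ S(θ,θ')` with `v j ≤ v j''`. -/
theorem avg_adht_sandwich {𝒩 : Type*} [Fintype 𝒩] [DecidableEq 𝒩]
    (G : Finset 𝒩) (f : ℕ)
    {Θ : Type*} [Fintype Θ] [Nonempty Θ]
    (Spair : Θ → Θ → Set 𝒩) (θ : Θ)
    (i : 𝒩) (hi : i ∈ G)
    (C : Finset 𝒩)
    (hbad : ((C : Set 𝒩) \ (G : Set 𝒩)).ncard ≤ f)
    (v : 𝒩 → ℝ) (hv : ∀ j, v j ∈ Set.Icc (0 : ℝ) 1)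
    (hcase1 : ∀ θ' ≠ θ, 2 * f + 2 ≤ ((C : Set 𝒩) ∩ Spair θ θ').ncard)
    (L : Finset 𝒩) (hL_sub : L ⊆ C) (hL_card : L.card = f)
    (hL_low : ∀ l ∈ L, ∀ j ∈ C \ L, v l ≤ v j)
    (H : Finset 𝒩) (hH_sub : H ⊆ C \ L)
    (hH_high : ∀ h ∈ H, ∀ j ∈ C \ (L ∪ H), v j ≤ v h)
    (hH_cover : ∀ θ' ≠ θ, f + 1 ≤ ((H : Set 𝒩) ∩ Spair θ θ').ncard)
    (hH_min : ∀ H' ⊆ C \ L,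
      ((∀ h ∈ H', ∀ j ∈ C \ (L ∪ H'), v j ≤ v h) ∧
        (∀ θ' ≠ θ, f + 1 ≤ ((H' : Set 𝒩) ∩ Spair θ θ').ncard)) →
      H.card ≤ H'.card) :
    ∀ j ∈ C \ (L ∪ H), ∀ θ' ≠ θ,
      (∃ j' ∈ C, j' ∈ G ∧ v j' ≤ v j) ∧
      (∃ j'' ∈ C, j'' ∈ G ∧ j'' ∈ Spair θ θ' ∧ v j ≤ v j'') :=
  avg_adht_sandwich_general G f Spair θ C hbad v L hL_sub hL_card hL_low H hH_sub hH_high hH_cover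
end

section
/- If μ ≠ ν, then the likelihood-ratio product Π_{k=1}^{N} ν(X_k)/μ(X_k) converges to 0 almost surely as N → ∞ (almost surely μ(X_k) > 0 for every k, so the ratios are well defined). -/
/-!
Let `ρ = ∑ₛ √(μ s ν s)` be the Hellinger affinity of `μ` and `ν`; strict AM–GM gives `ρ < 1`
as soon as `μ ≠ ν`. By independence, the square root `∏ₖ √(ν(Xₖ)/μ(Xₖ))` of the likelihood-ratio
product has expectation `ρ ^ N`, so the sum over `N` of these square roots has finite expectation.
It is therefore almost surely finite, its terms tend to `0`, and so do their squares.
-/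

open MeasureTheory Filter
open scoped ENNReal Topology

namespace Real

lemma add_div_two_sub_sqrt_mul {a b : ℝ} (ha : 0 ≤ a) (hb : 0 ≤ b) :
    (a + b) / 2 - √(a * b) = (√a - √b) ^ 2 / 2 := by
  rw [sqrt_mul ha]
  nlinarith [sq_sqrt ha, sq_sqrt hb]

lemma sqrt_mul_le_add_div_two {a b : ℝ} (ha : 0 ≤ a) (hb : 0 ≤ b) :
    √(a * b) ≤ (a + b) / 2 := by
  have := add_div_two_sub_sqrt_mul ha hb
  nlinarith [sq_nonneg (√a - √b)]

lemma sqrt_mul_lt_add_div_two {a b : ℝ} (ha : 0 ≤ a) (hb : 0 ≤ b) (hab : a ≠ b) :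
    √(a * b) < (a + b) / 2 := by
  have hsqrt : √a - √b ≠ 0 := sub_ne_zero.2 fun h => hab ((sqrt_inj ha hb).1 h)
  have := add_div_two_sub_sqrt_mul ha hb
  nlinarith [pow_pos (abs_pos.2 hsqrt) 2, sq_abs (√a - √b)]

lemma mul_sqrt_div_self {a : ℝ} (ha : 0 ≤ a) (b : ℝ) : a * √(b / a) = √(a * b) := by
  rw [← sqrt_sq ha, ← sqrt_mul (sq_nonneg a), sqrt_sq ha]
  rcases eq_or_ne a 0 with rfl | ha'
  · simp
  · field_simp

end Real

lemma sum_sqrt_mul_lt_one {S : Type*} [Fintype S] {μ ν : S → ℝ}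
    (hμ_nonneg : ∀ s, 0 ≤ μ s) (hμ_sum : ∑ s, μ s = 1)
    (hν_nonneg : ∀ s, 0 ≤ ν s) (hν_sum : ∑ s, ν s = 1) (hne : μ ≠ ν) :
    ∑ s, √(μ s * ν s) < 1 := by
  obtain ⟨s₀, hs₀⟩ := Function.ne_iff.1 hne
  calc ∑ s, √(μ s * ν s)
      < ∑ s, (μ s + ν s) / 2 :=
        Finset.sum_lt_sum (fun s _ => Real.sqrt_mul_le_add_div_two (hμ_nonneg s) (hν_nonneg s))
          ⟨s₀, Finset.mem_univ _, Real.sqrt_mul_lt_add_div_two (hμ_nonneg _) (hν_nonneg _) hs₀⟩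
    _ = 1 := by rw [← Finset.sum_div, Finset.sum_add_distrib, hμ_sum, hν_sum]; norm_num

section

variable {Ω S : Type*} [MeasurableSpace Ω] [MeasurableSpace S] {P : Measure Ω}

lemma lintegral_comp_eq_sum [Fintype S] [MeasurableSingletonClass S] {Y : Ω → S}
    (hY : Measurable Y) (f : S → ℝ≥0∞) :
    ∫⁻ ω, f (Y ω) ∂P = ∑ s, f s * P (Y ⁻¹' {s}) := by
  rw [← lintegral_map (measurable_of_finite f) hY, lintegral_fintype]
  simp only [Measure.map_apply hY (measurableSet_singleton _)]

lemma lintegral_ofReal_sqrt_div_comp_eq [Fintype S] [MeasurableSingletonClass S] {Y : Ω → S}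
    (hY : Measurable Y) {μ : S → ℝ} (hμ_nonneg : ∀ s, 0 ≤ μ s)
    (hY_law : ∀ s, P (Y ⁻¹' {s}) = ENNReal.ofReal (μ s)) (ν : S → ℝ) :
    ∫⁻ ω, ENNReal.ofReal √(ν (Y ω) / μ (Y ω)) ∂P = ENNReal.ofReal (∑ s, √(μ s * ν s)) := by
  rw [lintegral_comp_eq_sum hY (fun s => ENNReal.ofReal √(ν s / μ s)),
    ENNReal.ofReal_sum_of_nonneg fun s _ => Real.sqrt_nonneg _]
  refine Finset.sum_congr rfl fun s _ => ?_
  rw [hY_law, ← ENNReal.ofReal_mul (Real.sqrt_nonneg _), mul_comm,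
    Real.mul_sqrt_div_self (hμ_nonneg s)]

lemma ae_pos_comp_of_measure_preimage_eq_ofReal [Countable S] [MeasurableSingletonClass S]
    {Y : Ω → S} (hY : Measurable Y) {μ : S → ℝ}
    (hY_law : ∀ s, P (Y ⁻¹' {s}) = ENNReal.ofReal (μ s)) :
    ∀ᵐ ω ∂P, 0 < μ (Y ω) := by
  refine ae_of_ae_map (p := fun s => 0 < μ s) hY.aemeasurable
    (ae_iff_of_countable.2 fun s hs => ?_)
  rw [Measure.map_apply hY (measurableSet_singleton s), hY_law] at hs
  exact ENNReal.ofReal_pos.1 (pos_iff_ne_zero.2 hs)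

lemma ae_tendsto_zero_of_tsum_lintegral_ne_top {f : ℕ → Ω → ℝ≥0∞}
    (hf : ∀ n, AEMeasurable (f n) P) (h : ∑' n, ∫⁻ ω, f n ω ∂P ≠ ∞) :
    ∀ᵐ ω ∂P, Tendsto (fun n => f n ω) atTop (𝓝 0) := by
  rw [← lintegral_tsum hf] at h
  filter_upwards [ae_lt_top' (AEMeasurable.tsum hf) h] with ω hω
  exact ENNReal.tendsto_atTop_zero_of_tsum_ne_top hω.ne

lemma lintegral_prod_Icc_comp_eq_pow {X : ℕ → Ω → S} (hX_meas : ∀ k, 1 ≤ k → Measurable (X k))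
    (hX_indep : ProbabilityTheory.iIndepFun (fun k : {k : ℕ // 1 ≤ k} => X k.1) P)
    {g : S → ℝ≥0∞} (hg : Measurable g) {r : ℝ≥0∞}
    (hg_mean : ∀ k, 1 ≤ k → ∫⁻ ω, g (X k ω) ∂P = r) (N : ℕ) :
    ∫⁻ ω, ∏ k ∈ Finset.Icc 1 N, g (X k ω) ∂P = r ^ N := by
  have hIcc : ∀ k ∈ Finset.Icc 1 N, 1 ≤ k := fun k hk => (Finset.mem_Icc.1 hk).1
  simp_rw [← Finset.prod_subtype_of_mem _ hIcc]
  refine (ProbabilityTheory.lintegral_prod_eq_prod_lintegral_of_indepFun _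
      (fun (k : {k : ℕ // 1 ≤ k}) ω => g (X k.1 ω)) (hX_indep.comp (fun _ => g) fun _ => hg)
      fun k => hg.comp (hX_meas k.1 k.2)).trans ?_
  rw [Finset.prod_congr rfl fun k _ => hg_mean k.1 k.2,
    Finset.prod_subtype_of_mem (fun _ => r) hIcc, Finset.prod_const,
    Nat.card_Icc, Nat.add_sub_cancel]

end

theorem likelihood_ratio_product_tendsto_zero_general
    {S : Type*} [Fintype S] [MeasurableSpace S] [MeasurableSingletonClass S]
    (μ ν : S → ℝ)
    (hμ_nonneg : ∀ s, 0 ≤ μ s) (hμ_sum : ∑ s, μ s = 1)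
    (hν_nonneg : ∀ s, 0 ≤ ν s) (hν_sum : ∑ s, ν s = 1)
    (hne : μ ≠ ν)
    {Ω : Type*} [MeasurableSpace Ω] (P : Measure Ω) [IsProbabilityMeasure P]
    (X : ℕ → Ω → S)
    (hX_meas : ∀ k, 1 ≤ k → Measurable (X k))
    (hX_law : ∀ k, 1 ≤ k → ∀ s, P {ω | X k ω = s} = ENNReal.ofReal (μ s))
    (hX_indep : ProbabilityTheory.iIndepFun
      (fun k : {k : ℕ // 1 ≤ k} => X k.1) P) :
    ∀ᵐ ω ∂P, (∀ k, 1 ≤ k → 0 < μ (X k ω)) ∧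
      Tendsto (fun N => ∏ k ∈ Finset.Icc 1 N, ν (X k ω) / μ (X k ω)) atTop (nhds 0) := by
  set ρ : ℝ := ∑ s, √(μ s * ν s)
  set g : S → ℝ≥0∞ := fun s => ENNReal.ofReal √(ν s / μ s)
  have hg_mean : ∀ k, 1 ≤ k → ∫⁻ ω, g (X k ω) ∂P = ENNReal.ofReal ρ := fun k hk =>
    lintegral_ofReal_sqrt_div_comp_eq (hX_meas k hk) hμ_nonneg (hX_law k hk) ν
  have hρ : ENNReal.ofReal ρ < 1 := ENNReal.ofReal_lt_one.2 <|
    sum_sqrt_mul_lt_one hμ_nonneg hμ_sum hν_nonneg hν_sum hne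
  have hsum : ∑' N, ∫⁻ ω, ∏ k ∈ Finset.Icc 1 N, g (X k ω) ∂P ≠ ∞ := by
    simp_rw [lintegral_prod_Icc_comp_eq_pow hX_meas hX_indep (measurable_of_finite g) hg_mean,
      ENNReal.tsum_geometric]
    exact ENNReal.inv_ne_top.2 (tsub_pos_of_lt hρ).ne'
  have hpos : ∀ᵐ ω ∂P, ∀ k, 1 ≤ k → 0 < μ (X k ω) := ae_all_iff.2 fun k => by
    by_cases hk : 1 ≤ k
    · filter_upwards [ae_pos_comp_of_measure_preimage_eq_ofReal (hX_meas k hk) (hX_law k hk)]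
        with ω h _ using h
    · exact ae_of_all _ fun _ h => absurd h hk
  have hmeas : ∀ N, AEMeasurable (fun ω => ∏ k ∈ Finset.Icc 1 N, g (X k ω)) P := fun N =>
    (Finset.measurable_prod _ fun k hk =>
      (measurable_of_finite g).comp (hX_meas k (Finset.mem_Icc.1 hk).1)).aemeasurable
  filter_upwards [hpos, ae_tendsto_zero_of_tsum_lintegral_ne_top hmeas hsum]
    with ω hω_pos hω_lim
  refine ⟨hω_pos, ?_⟩
  have hsq := ((ENNReal.tendsto_toReal ENNReal.zero_ne_top).comp hω_lim).pow 2
  simp only [Function.comp_def, ENNReal.toReal_prod, g,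
    ENNReal.toReal_ofReal (Real.sqrt_nonneg _), ← Finset.prod_pow,
    Real.sq_sqrt (div_nonneg (hν_nonneg _) (hμ_nonneg _))] at hsq
  simpa using hsq

/-- **The likelihood-ratio product of distinct pmfs tends to zero almost surely.** Let `μ` and `ν`
be probability mass functions on a finite nonempty set `S` and let `(X_k)_{k ≥ 1}` be i.i.d.
`S`-valued random variables with common law `μ`. If `μ ≠ ν`, then the likelihood-ratio product
`Π_{k=1}^{N} ν(X_k)/μ(X_k)` converges to `0` almost surely as `N → ∞` (and almost surely
`μ(X_k) > 0` for every `k ≥ 1`, so the ratios are well defined). -/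
theorem likelihood_ratio_product_tendsto_zero
    {S : Type*} [Fintype S] [Nonempty S] [MeasurableSpace S] [MeasurableSingletonClass S]
    (μ ν : S → ℝ)
    (hμ_nonneg : ∀ s, 0 ≤ μ s) (hμ_sum : ∑ s, μ s = 1)
    (hν_nonneg : ∀ s, 0 ≤ ν s) (hν_sum : ∑ s, ν s = 1)
    (hne : μ ≠ ν)
    {Ω : Type*} [MeasurableSpace Ω] (P : Measure Ω) [IsProbabilityMeasure P]
    (X : ℕ → Ω → S)
    (hX_meas : ∀ k, 1 ≤ k → Measurable (X k))
    (hX_law : ∀ k, 1 ≤ k → ∀ s, P {ω | X k ω = s} = ENNReal.ofReal (μ s))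
    (hX_indep : ProbabilityTheory.iIndepFun
      (fun k : {k : ℕ // 1 ≤ k} => X k.1) P) :
    ∀ᵐ ω ∂P, (∀ k, 1 ≤ k → 0 < μ (X k ω)) ∧
      Tendsto (fun N => ∏ k ∈ Finset.Icc 1 N, ν (X k ω) / μ (X k ω)) atTop (nhds 0) :=
  likelihood_ratio_product_tendsto_zero_general μ ν hμ_nonneg hμ_sum hν_nonneg hν_sum hne P X
    hX_meas hX_law hX_indep
end

section
/- Suppose ν_q(s) > 0 whenever μ_q(s) > 0, for every q ∈ Q and s ∈ S, and suppose the set {t ≥ 1 : μ_{q_t} ≠ ν_{q_t}} is infinite. Then the partial sums Σ_{t=1}^{T} log( ν_{q_t}(s_t)/μ_{q_t}(s_t) ) tend to −∞ almost surely as T → ∞ (almost surely μ_{q_t}(s_t) > 0 for every t, so the terms are well defined). -/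
/-!
Write `ℓ_t = log (ν_{q_t}(s_t) / μ_{q_t}(s_t))`. The moment generating function of `ℓ_t` at `1/2`
is the Bhattacharyya coefficient `∑ₓ √(μ_{q_t}(x) ν_{q_t}(x))`, which is `< 1` exactly when
`μ_{q_t} ≠ ν_{q_t}`, and then, `Q` being finite, at most a uniform `r < 1`. Along the enumeration
of these times, independence and the Chernoff bound give `P(∑_{j<k} ℓ ≥ k log r) ≤ r^{k/2}`, so by
Borel–Cantelli the sums eventually stay below `k log r`. At all other times `ℓ_t = log 1 = 0`
almost surely, so the full partial sums follow the subsequence.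
-/

open MeasureTheory Filter ProbabilityTheory Real Finset

section Chernoff

variable {Ω : Type*} [MeasurableSpace Ω] {P : Measure Ω} [IsProbabilityMeasure P]
  {X : ℕ → Ω → ℝ} {θ r : ℝ}

theorem ae_tendsto_sum_range_atBot_of_mgf_le (hmeas : ∀ i, Measurable (X i))
    (hindep : iIndepFun X P) (hθ : 0 < θ) (hint : ∀ i, Integrable (fun ω => exp (θ * X i ω)) P)
    (hr : r < 1) (hmgf : ∀ i, mgf (X i) P θ ≤ r) :
    ∀ᵐ ω ∂P, Tendsto (fun n => ∑ i ∈ range n, X i ω) atTop atBot := by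
  have hr0 : 0 < r := (mgf_pos (hint 0)).trans_le (hmgf 0)
  set δ := log r / 2
  have hδ : δ < 0 := div_neg_of_neg_of_pos (log_neg hr0 hr) two_pos
  have hchernoff (n : ℕ) :
      P.real {ω | n * (δ / θ) ≤ (∑ i ∈ range n, X i) ω} ≤ exp δ ^ n :=
    calc _ ≤ exp (-θ * (n * (δ / θ))) * mgf (∑ i ∈ range n, X i) P θ :=
          measure_ge_le_exp_mul_mgf _ hθ.le
            (hindep.integrable_exp_mul_sum hmeas fun i _ => hint i)
      _ ≤ exp (-(n * δ)) * r ^ n := by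
          have hprod : ∏ i ∈ range n, mgf (X i) P θ ≤ r ^ n := by
            simpa using prod_le_prod (s := range n) (fun i _ => (mgf_pos (hint i)).le)
              fun i _ => hmgf i
          have hθδ : θ * (n * (δ / θ)) = n * δ := by field_simp
          rw [hindep.mgf_sum hmeas, neg_mul, hθδ]
          gcongr
      _ = exp δ ^ n := by
          rw [← exp_log hr0, ← exp_nat_mul, ← exp_nat_mul, ← exp_add]
          congr 1
          simp only [δ]
          ring
  have hsummable : ∑' n, P {ω | n * (δ / θ) ≤ (∑ i ∈ range n, X i) ω} ≠ ⊤ :=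
    ne_top_of_le_ne_top (summable_geometric_of_lt_one (exp_pos δ).le
      (exp_lt_one_iff.2 hδ)).tsum_ofReal_ne_top <| ENNReal.tsum_le_tsum fun n => by
        rw [← ofReal_measureReal]; exact ENNReal.ofReal_le_ofReal (hchernoff n)
  filter_upwards [ae_eventually_notMem hsummable] with ω hω
  refine tendsto_atBot_mono' atTop ?_
    (tendsto_natCast_atTop_atTop.atTop_mul_const_of_neg (div_neg_of_neg_of_pos hδ hθ))
  filter_upwards [hω] with n hn
  simpa [Finset.sum_apply] using (not_le.1 hn).le

end Chernoff

namespace Nat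

variable {p : ℕ → Prop} [DecidablePred p]

theorem filter_range_eq_image_nth (hp : {t | p t}.Infinite) (n : ℕ) :
    {t ∈ range n | p t} = (range (count p n)).image (nth p) := by
  ext t
  simp only [mem_filter, mem_range, mem_image]
  constructor
  · rintro ⟨htn, hpt⟩
    exact ⟨count p t, count_strict_mono hpt htn, nth_count hpt⟩
  · rintro ⟨j, hj, rfl⟩
    exact ⟨nth_lt_of_lt_count hj, nth_mem_of_infinite hp j⟩

theorem tendsto_count_atTop (hp : {t | p t}.Infinite) : Tendsto (count p) atTop atTop :=
  (count_monotone p).tendsto_atTop_atTop fun k => ⟨nth p k, (count_nth_of_infinite hp k).ge⟩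

theorem tendsto_sum_filter_range_of_tendsto_sum_nth {M : Type*} [AddCommMonoid M]
    {l : Filter M} (hp : {t | p t}.Infinite) {f : ℕ → M}
    (h : Tendsto (fun k => ∑ j ∈ range k, f (nth p j)) atTop l) :
    Tendsto (fun n => ∑ t ∈ range n with p t, f t) atTop l := by
  simp_rw [filter_range_eq_image_nth hp, sum_image fun _ _ _ _ hij => nth_injective hp hij]
  exact h.comp (tendsto_count_atTop hp)

theorem tendsto_sum_Icc_one_of_tendsto_sum_nth {M : Type*} [AddCommMonoid M]
    {l : Filter M} (hp : {t | p t}.Infinite) (hp_pos : ∀ t, p t → 1 ≤ t) {f : ℕ → M}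
    (hf : ∀ t, 1 ≤ t → ¬p t → f t = 0)
    (h : Tendsto (fun k => ∑ j ∈ range k, f (nth p j)) atTop l) :
    Tendsto (fun T => ∑ t ∈ Icc 1 T, f t) atTop l := by
  have hsum (T : ℕ) : ∑ t ∈ Icc 1 T, f t = ∑ t ∈ range (T + 1) with p t, f t := by
    rw [← sum_filter_of_ne fun t ht hft => not_not.1 (mt (hf t (mem_Icc.1 ht).1) hft)]
    congr 1
    ext t
    simp only [mem_filter, mem_Icc, mem_range]
    exact ⟨fun ⟨⟨_, h⟩, hpt⟩ => ⟨by omega, hpt⟩, fun ⟨h, hpt⟩ => ⟨⟨hp_pos t hpt, by omega⟩, hpt⟩⟩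
  simp_rw [hsum]
  exact (tendsto_sum_filter_range_of_tendsto_sum_nth hp h).comp (tendsto_add_atTop_nat 1)

end Nat

namespace Real

theorem two_mul_sqrt_mul {a b : ℝ} (ha : 0 ≤ a) (hb : 0 ≤ b) :
    2 * √(a * b) = a + b - (√a - √b) ^ 2 := by
  rw [sqrt_mul ha]
  nlinarith [sq_sqrt ha, sq_sqrt hb]

theorem sum_sqrt_mul_lt_one {S : Type*} [Fintype S] {p q : S → ℝ} (hp : 0 ≤ p) (hq : 0 ≤ q)
    (hp1 : ∑ x, p x = 1) (hq1 : ∑ x, q x = 1) (hpq : p ≠ q) : ∑ x, √(p x * q x) < 1 := by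
  obtain ⟨x₀, hx₀⟩ := Function.ne_iff.1 hpq
  have hsq : 0 < ∑ x, (√(p x) - √(q x)) ^ 2 :=
    sum_pos' (fun x _ => sq_nonneg _) ⟨x₀, mem_univ _,
      sq_pos_of_ne_zero (sub_ne_zero.2 fun h => hx₀ ((sqrt_inj (hp x₀) (hq x₀)).1 h))⟩
  have : 2 * ∑ x, √(p x * q x) = 2 - ∑ x, (√(p x) - √(q x)) ^ 2 := by
    rw [mul_sum, sum_congr rfl fun x _ => two_mul_sqrt_mul (hp x) (hq x), sum_sub_distrib,
      sum_add_distrib, hp1, hq1]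
    norm_num
  linarith

theorem mul_exp_half_mul_log_div {a b : ℝ} (ha : 0 ≤ a) (hab : 0 < a → 0 < b) :
    a * exp (1 / 2 * log (b / a)) = √(a * b) := by
  rcases ha.eq_or_lt with rfl | ha
  · simp
  · rw [mul_comm (1 / 2), ← rpow_def_of_pos (div_pos (hab ha) ha), ← sqrt_eq_rpow,
      sqrt_div' _ ha.le, sqrt_mul ha.le]
    field_simp
    rw [sq_sqrt ha.le, mul_comm]

end Real

theorem Finite.exists_lt_forall_le_of_forall_lt {ι : Type*} [Finite ι] {P : ι → Prop}
    {f : ι → ℝ} {a : ℝ} (h : ∀ i, P i → f i < a) : ∃ b < a, ∀ i, P i → f i ≤ b := by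
  set T := insert (a - 1) (f '' {i | P i})
  have hT : T.Finite := ((Set.toFinite _).image f).insert _
  refine ⟨sSup T, ?_, fun i hi => le_csSup hT.bddAbove (Or.inr ⟨i, hi, rfl⟩)⟩
  rcases (Set.insert_nonempty _ _).csSup_mem hT with hmax | ⟨i, hi, hmax⟩
  · rw [hmax]; linarith
  · rw [← hmax]; exact h i hi

section Law

variable {S Ω : Type*} [MeasurableSpace Ω] {P : Measure Ω} {Y : Ω → S} {p : S → ℝ}

theorem ae_pos_comp_of_measure_eq_ofReal [Countable S] (hp : ∀ x, 0 ≤ p x)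
    (hlaw : ∀ x, P {ω | Y ω = x} = ENNReal.ofReal (p x)) : ∀ᵐ ω ∂P, 0 < p (Y ω) := by
  have hatom (x : S) : ∀ᵐ ω ∂P, Y ω = x → 0 < p x := by
    rcases (hp x).eq_or_lt with hx | hx
    · have : P {ω | Y ω = x} = 0 := by rw [hlaw, ← hx, ENNReal.ofReal_zero]
      filter_upwards [measure_eq_zero_iff_ae_notMem.1 this] with ω hω h
      exact absurd h hω
    · exact ae_of_all _ fun _ _ => hx
  filter_upwards [ae_all_iff.2 hatom] with ω hω using hω _ rfl

variable [Fintype S] [MeasurableSpace S] [MeasurableSingletonClass S] [IsFiniteMeasure P]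

theorem integral_comp_eq_sum_of_measure_eq_ofReal (hY : Measurable Y) (hp : ∀ x, 0 ≤ p x)
    (hlaw : ∀ x, P {ω | Y ω = x} = ENNReal.ofReal (p x)) (f : S → ℝ) :
    ∫ ω, f (Y ω) ∂P = ∑ x, p x * f x := by
  rw [← integral_map hY.aemeasurable (measurable_of_finite f).aestronglyMeasurable,
    integral_fintype Integrable.of_finite]
  refine sum_congr rfl fun x _ => ?_
  rw [smul_eq_mul, measureReal_def, Measure.map_apply hY (measurableSet_singleton x)]
  change (P {ω | Y ω = x}).toReal * f x = _
  rw [hlaw x, ENNReal.toReal_ofReal (hp x)]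

theorem mgf_log_div_comp_half_eq_sum_sqrt_mul (hY : Measurable Y) (hp : ∀ x, 0 ≤ p x)
    (hlaw : ∀ x, P {ω | Y ω = x} = ENNReal.ofReal (p x)) {q : S → ℝ}
    (hpq : ∀ x, 0 < p x → 0 < q x) :
    mgf (fun ω => log (q (Y ω) / p (Y ω))) P (1 / 2) = ∑ x, √(p x * q x) :=
  (integral_comp_eq_sum_of_measure_eq_ofReal hY hp hlaw _).trans <|
    sum_congr rfl fun x _ => Real.mul_exp_half_mul_log_div (hp x) (hpq x)

end Law

theorem log_likelihood_partial_sums_tendsto_atBot_general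
    {S : Type*} [Fintype S] [MeasurableSpace S] [MeasurableSingletonClass S]
    {Q : Type*} [Fintype Q]
    (μ ν : Q → S → ℝ)
    (hμ_nonneg : ∀ q s, 0 ≤ μ q s) (hμ_sum : ∀ q, ∑ s, μ q s = 1)
    (hν_nonneg : ∀ q s, 0 ≤ ν q s) (hν_sum : ∀ q, ∑ s, ν q s = 1)
    (habs : ∀ q s, 0 < μ q s → 0 < ν q s)
    (q : ℕ → Q)
    (hinf : {t : ℕ | 1 ≤ t ∧ μ (q t) ≠ ν (q t)}.Infinite)
    {Ω : Type*} [MeasurableSpace Ω] (P : Measure Ω) [IsProbabilityMeasure P]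
    (s : ℕ → Ω → S)
    (hs_meas : ∀ t, 1 ≤ t → Measurable (s t))
    (hs_law : ∀ t, 1 ≤ t → ∀ x, P {ω | s t ω = x} = ENNReal.ofReal (μ (q t) x))
    (hs_indep : ProbabilityTheory.iIndepFun
      (m := fun _ : {t : ℕ // 1 ≤ t} => (inferInstance : MeasurableSpace S))
      (fun t => s t.1) P) :
    ∀ᵐ ω ∂P, (∀ t, 1 ≤ t → 0 < μ (q t) (s t ω)) ∧
      Tendsto
        (fun T : ℕ => ∑ t ∈ Finset.Icc 1 T, Real.log (ν (q t) (s t ω) / μ (q t) (s t ω)))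
        atTop atBot := by
  classical
  set D : ℕ → Prop := fun t => 1 ≤ t ∧ μ (q t) ≠ ν (q t)
  set ℓ : ℕ → S → ℝ := fun t x => log (ν (q t) x / μ (q t) x)
  set m := Nat.nth D
  have hm_pos (k : ℕ) : 1 ≤ m k := (Nat.nth_mem_of_infinite hinf k).1
  have hm_meas (k : ℕ) : Measurable (s (m k)) := hs_meas _ (hm_pos k)
  have hindep : iIndepFun (fun k => ℓ (m k) ∘ s (m k)) P :=
    (hs_indep.precomp (g := fun k => ⟨m k, hm_pos k⟩)
      fun _ _ h => Nat.nth_injective hinf (congrArg Subtype.val h)).comp _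
        fun _ => measurable_of_finite _
  obtain ⟨r, hr1, hr⟩ := Finite.exists_lt_forall_le_of_forall_lt fun c (hc : μ c ≠ ν c) =>
    Real.sum_sqrt_mul_lt_one (hμ_nonneg c) (hν_nonneg c) (hμ_sum c) (hν_sum c) hc
  have hlim : ∀ᵐ ω ∂P, Tendsto (fun n => ∑ k ∈ range n, ℓ (m k) (s (m k) ω)) atTop atBot :=
    ae_tendsto_sum_range_atBot_of_mgf_le
      (fun k => (measurable_of_finite (ℓ (m k))).comp (hm_meas k)) hindep one_half_pos
      (fun k => (Integrable.of_finite (f := fun x => exp (1 / 2 * ℓ (m k) x))).comp_measurable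
        (hm_meas k)) hr1
      fun k => (mgf_log_div_comp_half_eq_sum_sqrt_mul (hm_meas k) (hμ_nonneg _)
        (hs_law _ (hm_pos k)) (habs _)).trans_le (hr _ (Nat.nth_mem_of_infinite hinf k).2)
  have hpos : ∀ᵐ ω ∂P, ∀ t : {t : ℕ // 1 ≤ t}, 0 < μ (q t) (s t ω) :=
    ae_all_iff.2 fun t => ae_pos_comp_of_measure_eq_ofReal (hμ_nonneg _) (hs_law t.1 t.2)
  filter_upwards [hpos, hlim] with ω hω hlim
  refine ⟨fun t ht => hω ⟨t, ht⟩, ?_⟩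
  refine Nat.tendsto_sum_Icc_one_of_tendsto_sum_nth (f := fun t => ℓ t (s t ω)) hinf
    (fun _ ht => ht.1) (fun t ht hDt => ?_) hlim
  have hμν : μ (q t) = ν (q t) := not_not.1 fun hne => hDt ⟨ht, hne⟩
  simp only [ℓ, ← hμν, div_self (hω ⟨t, ht⟩).ne', log_one]

/-- **Divergence of log-likelihood partial sums along a path.** `S` and `Q` are finite nonempty
sets; for each `q ∈ Q`, `μ_q` and `ν_q` are probability mass functions on `S`; `(q_t)_{t ≥ 1}` is
a fixed deterministic path in `Q`; the observations `(s_t)_{t ≥ 1}` are mutually independent with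
`s_t` distributed according to `μ_{q_t}`. Suppose `ν_q(s) > 0` whenever `μ_q(s) > 0`, and that
`μ_{q_t} ≠ ν_{q_t}` for infinitely many `t ≥ 1`. Then almost surely `μ_{q_t}(s_t) > 0` for every
`t ≥ 1` (so the terms are well defined) and the partial sums
`Σ_{t=1}^{T} log(ν_{q_t}(s_t)/μ_{q_t}(s_t))` tend to `−∞` as `T → ∞`. -/
theorem log_likelihood_partial_sums_tendsto_atBot
    {S : Type*} [Fintype S] [Nonempty S] [MeasurableSpace S] [MeasurableSingletonClass S]
    {Q : Type*} [Fintype Q] [Nonempty Q]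
    (μ ν : Q → S → ℝ)
    (hμ_nonneg : ∀ q s, 0 ≤ μ q s) (hμ_sum : ∀ q, ∑ s, μ q s = 1)
    (hν_nonneg : ∀ q s, 0 ≤ ν q s) (hν_sum : ∀ q, ∑ s, ν q s = 1)
    (habs : ∀ q s, 0 < μ q s → 0 < ν q s)
    (q : ℕ → Q)
    (hinf : {t : ℕ | 1 ≤ t ∧ μ (q t) ≠ ν (q t)}.Infinite)
    {Ω : Type*} [MeasurableSpace Ω] (P : Measure Ω) [IsProbabilityMeasure P]
    (s : ℕ → Ω → S)
    (hs_meas : ∀ t, 1 ≤ t → Measurable (s t))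
    (hs_law : ∀ t, 1 ≤ t → ∀ x, P {ω | s t ω = x} = ENNReal.ofReal (μ (q t) x))
    (hs_indep : ProbabilityTheory.iIndepFun
      (m := fun _ : {t : ℕ // 1 ≤ t} => (inferInstance : MeasurableSpace S))
      (fun t => s t.1) P) :
    ∀ᵐ ω ∂P, (∀ t, 1 ≤ t → 0 < μ (q t) (s t ω)) ∧
      Tendsto
        (fun T : ℕ => ∑ t ∈ Finset.Icc 1 T, Real.log (ν (q t) (s t ω) / μ (q t) (s t ω)))
        atTop atBot :=
  log_likelihood_partial_sums_tendsto_atBot_general μ ν hμ_nonneg hμ_sum hν_nonneg hν_sum habs q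
    hinf P s hs_meas hs_law hs_indep
end

section
/- Let I be a finite set, v : I → ℝ, ε ∈ ℝ, B ⊆ I with |B| ≤ f (the bad indices), and S' ⊆ I with |S'| ≥ 2f+1 such that v(j) ≤ ε for every j ∈ S' \ B. Let R ⊆ I satisfy |R| = |I| − f and v(r) ≥ v(j) for every r ∈ R and every j ∈ I \ R (i.e., R is obtained from I by deleting f indices carrying the f smallest values). Then there exists r ∈ R ∩ (S' \ B) with v(r) ≤ ε; in particular min_{r∈R} v(r) ≤ ε. -/
/-! `S' \ B` has at least `f + 1` elements while `R` omits only `f` indices of `I`,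
so by pigeonhole some index of `S' \ B` survives the trimming. -/

open Finset

theorem inter_sdiff_nonempty_of_card {ι : Type*} [DecidableEq ι] {f : ℕ} {I B S R : Finset ι}
    (hB_card : #B ≤ f) (hS_sub : S ⊆ I) (hS_card : 2 * f + 1 ≤ #S)
    (hR_sub : R ⊆ I) (hR_card : #R = #I - f) : (R ∩ (S \ B)).Nonempty := by
  have hSI : #S ≤ #I := card_le_card hS_sub
  have hSB : #S - #B ≤ #(S \ B) := le_card_sdiff B S
  exact inter_nonempty_of_card_lt_card_add_card hR_sub (sdiff_subset.trans hS_sub) (by omega)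

theorem trim_upper_bound_general {ι : Type*} [DecidableEq ι] (f : ℕ)
    (I : Finset ι)
    (v : ι → ℝ) (ε : ℝ)
    (B : Finset ι) (hB_card : B.card ≤ f)
    (S' : Finset ι) (hS'_sub : S' ⊆ I) (hS'_card : 2 * f + 1 ≤ S'.card)
    (hS'_small : ∀ j ∈ S' \ B, v j ≤ ε)
    (R : Finset ι) (hR_sub : R ⊆ I) (hR_card : R.card = I.card - f) :
    (∃ r ∈ R ∩ (S' \ B), v r ≤ ε) ∧ sInf (v '' (R : Set ι)) ≤ ε := by
  obtain ⟨r, hr⟩ := inter_sdiff_nonempty_of_card hB_card hS'_sub hS'_card hR_sub hR_card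
  have hvr : v r ≤ ε := hS'_small r (mem_inter.mp hr).2
  refine ⟨⟨r, hr, hvr⟩, ?_⟩
  have hbdd : BddBelow (v '' (R : Set ι)) := (R.finite_toSet.image v).bddBelow
  exact (csInf_le hbdd ⟨r, (mem_inter.mp hr).1, rfl⟩).trans hvr

/-- **Trimming lemma (upper bound).** Let `I` be a finite set, `v : I → ℝ`, `ε ∈ ℝ`, `B ⊆ I` with
`|B| ≤ f` (the bad indices), and `S' ⊆ I` with `|S'| ≥ 2f+1` such that `v j ≤ ε` for every
`j ∈ S' \ B`. Let `R ⊆ I` satisfy `|R| = |I| − f` and `v r ≥ v j` for every `r ∈ R` and every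
`j ∈ I \ R` (i.e. `R` is obtained from `I` by deleting `f` indices carrying the `f` smallest
values). Then there exists `r ∈ R ∩ (S' \ B)` with `v r ≤ ε`; in particular
`min_{r ∈ R} v r ≤ ε`. -/
theorem trim_upper_bound {ι : Type*} [DecidableEq ι] (f : ℕ)
    (I : Finset ι)
    (v : ι → ℝ) (ε : ℝ)
    (B : Finset ι) (hB_sub : B ⊆ I) (hB_card : B.card ≤ f)
    (S' : Finset ι) (hS'_sub : S' ⊆ I) (hS'_card : 2 * f + 1 ≤ S'.card)
    (hS'_small : ∀ j ∈ S' \ B, v j ≤ ε)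
    (R : Finset ι) (hR_sub : R ⊆ I) (hR_card : R.card = I.card - f)
    (hR_high : ∀ r ∈ R, ∀ j ∈ I \ R, v j ≤ v r) :
    (∃ r ∈ R ∩ (S' \ B), v r ≤ ε) ∧ sInf (v '' (R : Set ι)) ≤ ε :=
  trim_upper_bound_general f I v ε B hB_card S' hS'_sub hS'_card hS'_small R hR_sub hR_card
end

section
/- Let N be a finite set, f ∈ ℕ, K a nonempty finite index set, and {S_k}_{k∈K} a family of subsets of N with |S_k| ≥ 2f+2 for every k ∈ K. Let v : N → ℝ, let L ⊆ N with |L| = f and v(l) ≤ v(j) for every l ∈ L and j ∈ N \ L (L consists of f indices attaining the f lowest values), and let H be of minimal cardinality among all subsets H' ⊆ N \ L such that (a) v(h) ≥ v(j) for every h ∈ H' and every j ∈ N \ (L ∪ H'), and (b) |H' ∩ S_k| ≥ f+1 for every k ∈ K; assume at least one such subset H' exists. Then the middle set M = N \ (L ∪ H) is nonempty. -/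
/-- **The middle set of the average rule is nonempty.** Let `N` be a finite set, `f ∈ ℕ`, `K` a
nonempty finite index set, and `{S k}_{k ∈ K}` a family of subsets of `N` with `|S k| ≥ 2f+2` for
every `k`. Let `v : ι → ℝ`, let `L ⊆ N` with `|L| = f` and `v l ≤ v j` for every `l ∈ L` and
`j ∈ N \ L` (`L` consists of `f` indices attaining the `f` lowest values), and let `H` be of
minimal cardinality among all subsets `H' ⊆ N \ L` such that (a) `v h ≥ v j` for every `h ∈ H'`
and every `j ∈ N \ (L ∪ H')`, and (b) `|H' ∩ S k| ≥ f+1` for every `k` (at least one such subset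
is assumed to exist, namely `H` itself). Then the middle set `M = N \ (L ∪ H)` is nonempty. -/
theorem middle_set_nonempty {ι : Type*} [DecidableEq ι] (f : ℕ)
    (N : Finset ι)
    {K : Type*} [Fintype K] [Nonempty K]
    (S : K → Finset ι)
    (hS_sub : ∀ k, S k ⊆ N)
    (hS_card : ∀ k, 2 * f + 2 ≤ (S k).card)
    (v : ι → ℝ)
    (L : Finset ι) (hL_sub : L ⊆ N) (hL_card : L.card = f)
    (hL_low : ∀ l ∈ L, ∀ j ∈ N \ L, v l ≤ v j)
    (H : Finset ι) (hH_sub : H ⊆ N \ L)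
    (hH_high : ∀ h ∈ H, ∀ j ∈ N \ (L ∪ H), v j ≤ v h)
    (hH_cover : ∀ k, f + 1 ≤ (H ∩ S k).card)
    (hH_min : ∀ H' ⊆ N \ L,
      ((∀ h ∈ H', ∀ j ∈ N \ (L ∪ H'), v j ≤ v h) ∧ (∀ k, f + 1 ≤ (H' ∩ S k).card)) →
        H.card ≤ H'.card) :
    (N \ (L ∪ H)).Nonempty := by
  by_contra hcon
  rw [Finset.not_nonempty_iff_eq_empty, Finset.sdiff_eq_empty_iff_subset] at hcon
  -- H is nonempty
  have hHne : H.Nonempty := by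
    obtain ⟨k⟩ := (inferInstance : Nonempty K)
    have := hH_cover k
    have : 0 < (H ∩ S k).card := by omega
    obtain ⟨x, hx⟩ := Finset.card_pos.mp this
    exact ⟨x, (Finset.mem_inter.mp hx).1⟩
  -- choose h0 ∈ H minimizing v
  obtain ⟨h0, hh0H, hh0min⟩ := H.exists_min_image v hHne
  set H' := H.erase h0 with hH'
  have hH'sub : H' ⊆ N \ L := (Finset.erase_subset _ _).trans hH_sub
  have cond1 : ∀ h ∈ H', ∀ j ∈ N \ (L ∪ H'), v j ≤ v h := by
    intro h hh j hj
    rw [Finset.mem_sdiff, Finset.mem_union] at hj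
    obtain ⟨hjN, hj2⟩ := hj
    have hjH : j ∈ H := by
      have := hcon hjN
      rw [Finset.mem_union] at this
      tauto
    have : j = h0 := by
      by_contra hne
      exact hj2 (Or.inr (Finset.mem_erase.mpr ⟨hne, hjH⟩))
    subst this
    exact hh0min h (Finset.mem_of_mem_erase hh)
  have cond2 : ∀ k, f + 1 ≤ (H' ∩ S k).card := by
    intro k
    have hSk : S k \ L ⊆ H := by
      intro x hx
      rw [Finset.mem_sdiff] at hx
      have := hcon (hS_sub k hx.1)
      rw [Finset.mem_union] at this
      tauto
    have h1 : (S k).card - f ≤ (S k ∩ H).card := by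
      have : S k \ L ⊆ S k ∩ H := fun x hx => Finset.mem_inter.mpr
        ⟨(Finset.mem_sdiff.mp hx).1, hSk hx⟩
      have hc := Finset.card_le_card this
      have := Finset.le_card_sdiff L (S k)
      omega
    have h2 : (S k ∩ H).card - 1 ≤ (H' ∩ S k).card := by
      have : (S k ∩ H).erase h0 ⊆ H' ∩ S k := by
        intro x hx
        rw [Finset.mem_erase, Finset.mem_inter] at hx
        exact Finset.mem_inter.mpr ⟨Finset.mem_erase.mpr ⟨hx.1, hx.2.2⟩, hx.2.1⟩
      have := Finset.card_le_card this
      have := Finset.pred_card_le_card_erase (s := S k ∩ H) (a := h0)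
      omega
    have := hS_card k
    omega
  have hmin := hH_min H' hH'sub ⟨cond1, cond2⟩
  have : H'.card = H.card - 1 := Finset.card_erase_of_mem hh0H
  have : 0 < H.card := Finset.card_pos.mpr hHne
  omega
end
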